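/- arXiv:math/0608208 — 11 statements merged into one kernel-verified Lean document; each statement's English description precedes it below -/
import Mathlib

section
/- Define F on the positive integers by F(n) = n/3 if n ≡ 0 (mod 3); F(n) = (3n+1)/2 if n ≡ 7 or 11 (mod 12); F(n) = (n+1)/2 if n ≡ 1 or 5 (mod 12). Then for every positive integer n there exists k ≥ 0 with F^(k)(n) = 1, i.e., every trajectory of F reaches 1. -/
/-!
Every `n > 1` has an iterate that is positive and smaller than `n`, so the theorem follows by
strong induction. This is immediate unless `n ≡ 3 (mod 4)` and `3 ∤ n`. In that case write
`n + 1 = 2 ^ (a + 1) * b` with `b` odd and `a ≥ 1`: each of the next `a` steps multiplies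
`n + 1` by `3 / 2`, leading to `2 * 3 ^ a * b - 1`, which is `≡ 1 (mod 4)` and prime to `3`.
One more step gives `3 ^ a * b`, and `a` divisions by `3` then reach `b < n`.
-/

/-- Farkas's map: F(n) = n/3 if 3 ∣ n; F(n) = (3n+1)/2 if n ≡ 7, 11 (mod 12);
F(n) = (n+1)/2 if n ≡ 1, 5 (mod 12). -/
def farkasF (n : ℕ) : ℕ :=
  if n % 3 = 0 then n / 3
  else if n % 12 = 7 ∨ n % 12 = 11 then (3 * n + 1) / 2
  else (n + 1) / 2

lemma farkasF_of_mod_three_eq_zero {n : ℕ} (h3 : n % 3 = 0) : farkasF n = n / 3 := by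
  rw [farkasF, if_pos h3]

lemma farkasF_of_mod_four_eq_three {n : ℕ} (h3 : n % 3 ≠ 0) (h4 : n % 4 = 3) :
    2 * (farkasF n + 1) = 3 * (n + 1) := by
  have h12 : n % 12 = 7 ∨ n % 12 = 11 := by omega
  rw [farkasF, if_neg h3, if_pos h12]
  omega

lemma farkasF_of_mod_four_ne_three {n : ℕ} (h3 : n % 3 ≠ 0) (h4 : n % 4 ≠ 3) :
    farkasF n = (n + 1) / 2 := by
  have h12 : ¬(n % 12 = 7 ∨ n % 12 = 11) := by omega
  rw [farkasF, if_neg h3, if_neg h12]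

lemma iterate_farkasF_three_pow_mul (i c : ℕ) : farkasF^[i] (3 ^ i * c) = c := by
  induction i with
  | zero => simp
  | succ i ih =>
    rw [Function.iterate_succ_apply, pow_succ', mul_assoc,
      farkasF_of_mod_three_eq_zero (Nat.mul_mod_right 3 _), Nat.mul_div_cancel_left _ three_pos, ih]

lemma iterate_farkasF_add_one {a b n : ℕ} (h3 : n % 3 ≠ 0) (hn : n + 1 = 2 ^ (a + 1) * b) :
    farkasF^[a] n + 1 = 2 * 3 ^ a * b := by
  induction a generalizing n b with
  | zero => simpa using hn
  | succ a ih =>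
    have hn4 : n + 1 = 4 * (2 ^ a * b) := by rw [hn]; ring
    have hF := farkasF_of_mod_four_eq_three h3 (by omega)
    have hF1 : farkasF n + 1 = 2 ^ (a + 1) * (3 * b) := by
      have : 2 ^ (a + 1) * (3 * b) = 6 * (2 ^ a * b) := by ring
      omega
    rw [Function.iterate_succ_apply, ih (by omega) hF1]
    ring

lemma exists_iterate_farkasF_lt {n : ℕ} (hn : 1 < n) :
    ∃ k, 0 < farkasF^[k] n ∧ farkasF^[k] n < n := by
  by_cases h3 : n % 3 = 0
  · refine ⟨1, ?_⟩
    rw [Function.iterate_one, farkasF_of_mod_three_eq_zero h3]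
    omega
  by_cases h4 : n % 4 ≠ 3
  · refine ⟨1, ?_⟩
    rw [Function.iterate_one, farkasF_of_mod_four_ne_three h3 h4]
    omega
  obtain ⟨e, b, hb, hnb⟩ := Nat.exists_eq_two_pow_mul_odd (n := n + 1) (by omega)
  have hb2 : b % 2 = 1 := Nat.odd_iff.mp hb
  obtain _ | _ | a := e
  · omega
  · omega
  set m := farkasF^[a + 1] n with hm
  have hm1 : m + 1 = 2 * (3 ^ (a + 1) * b) := by
    rw [iterate_farkasF_add_one h3 hnb]
    ring
  have hodd : (3 ^ (a + 1) * b) % 2 = 1 := Nat.odd_iff.mp ((Odd.pow (by decide)).mul hb)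
  have hm3 : m % 3 ≠ 0 := by
    have : 3 ^ (a + 1) * b = 3 * (3 ^ a * b) := by ring
    omega
  have hFm : farkasF m = 3 ^ (a + 1) * b := by
    rw [farkasF_of_mod_four_ne_three hm3 (by omega)]
    omega
  have hiter : farkasF^[(a + 1) + (1 + (a + 1))] n = b := by
    rw [Function.iterate_add_apply farkasF (a + 1), Function.iterate_add_apply farkasF 1, ← hm,
      Function.iterate_one, hFm, iterate_farkasF_three_pow_mul]
  have hn4 : n + 1 = 4 * (2 ^ a * b) := by rw [hnb]; ring
  have hb_le : b ≤ 2 ^ a * b := Nat.le_mul_of_pos_left b (Nat.two_pow_pos a)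
  exact ⟨_, by rw [hiter]; omega⟩

/-- (Farkas, 2005) Every trajectory of F on the positive integers reaches 1. -/
theorem farkas_reaches_one (n : ℕ) (hn : 0 < n) : ∃ k : ℕ, farkasF^[k] n = 1 := by
  induction n using Nat.strong_induction_on with
  | _ n ih =>
  rcases Nat.lt_or_ge 1 n with h1 | h1
  · obtain ⟨k, hpos, hlt⟩ := exists_iterate_farkasF_lt h1
    obtain ⟨j, hj⟩ := ih _ hlt hpos
    exact ⟨j + k, by rw [Function.iterate_add_apply, hj]⟩
  · exact ⟨0, by simp only [Function.iterate_zero, id_eq]; omega⟩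
end

section
/- Let A ≥ 0 and B ≥ 1 be integers. If every positive integer of the form A + Bn (for integers n ≥ 0) has some iterate under T equal to 1, then every positive integer m has some iterate T^(k)(m) = 1. In other words, the truth of the 3x+1 conjecture on any single arithmetic progression {A + Bn : n ≥ 0} implies the full 3x+1 conjecture. -/
/-!
Let `S` be the set of positive integers whose trajectory never reaches `1`. It satisfies
`T⁻¹ S = S`, so it is closed under the inverse branches `x ↦ 2x` and `x ↦ (2x - 1)/3`, and, if
nonempty, it contains some `z₀ ≡ 2 (mod 3)` (the successor of an odd element). From `z₀` these two
branches reach every residue class modulo every odd modulus, in arbitrarily large elements: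
modulo `Q` coprime to `6` the branches act as affine bijections of `ZMod Q` generating a
transitive group, while the powers of `4 ^ φ(Q) ≡ 1 (mod Q)` run through a full `3`-adic class.
Writing `B = 2^α M` with `M` odd, `T^α` maps `A + 2^α t` to `d + 3^j t`; an element of `S` that is
`≡ d (mod 3^j M)` and larger than `d` is therefore the image under `T^α` of a term of the
progression, which would lie in `S` too.
-/

/-- The 3x+1 function T(x) = (3x+1)/2 for x odd, x/2 for x even. -/
def collatzT (x : ℤ) : ℤ := if x % 2 = 0 then x / 2 else (3 * x + 1) / 2

theorem IsCoprime.exists_mul_modEq_one {a n : ℤ} (h : IsCoprime a n) :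
    ∃ b, a * b ≡ 1 [ZMOD n] :=
  let ⟨u, v, huv⟩ := h
  ⟨u, Int.modEq_iff_dvd.2 ⟨v, by linear_combination -huv⟩⟩

theorem Int.isCoprime_three_pow_of_not_dvd {x : ℤ} (hx : ¬ 3 ∣ x) (n : ℕ) :
    IsCoprime x (3 ^ n) :=
  ((Int.prime_three.coprime_iff_not_dvd).2 hx).symm.pow_right

theorem Int.exists_eq_one_add_pow_mul {p x : ℤ} (hp : p.natAbs ≠ 1) (hx : x ≡ 1 [ZMOD p])
    (hx1 : x ≠ 1) : ∃ (e : ℕ) (w : ℤ), e ≠ 0 ∧ ¬ p ∣ w ∧ x = 1 + p ^ e * w := by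
  obtain ⟨w, hxw, hw⟩ :=
    (Int.finiteMultiplicity_iff.2 ⟨hp, sub_ne_zero.2 hx1⟩).exists_eq_pow_mul_and_not_dvd
  refine ⟨_, w, fun he => hw ?_, hw, by linear_combination hxw⟩
  rw [he, pow_zero, one_mul] at hxw
  exact hxw ▸ hx.symm.dvd

/-- The powers of `1 + p ^ e * w`, of order `p ^ s` modulo `p ^ (s + e)`, fill the `p ^ s`
classes `≡ 1 (mod p ^ e)`. -/
theorem Int.exists_pow_modEq_one_add_mul {p e : ℕ} (hp : p.Prime) (he : e ≠ 0)
    (hpe : e + 2 ≤ p * e) {w : ℤ} (hw : ¬ (p : ℤ) ∣ w) (s : ℕ) (a : ℤ) :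
    ∃ n : ℕ, (1 + p ^ e * w) ^ n ≡ 1 + p ^ e * a [ZMOD p ^ (s + e)] := by
  set N := p ^ (s + e)
  set g : ZMod N := 1 + p ^ e * w
  set T := (Finset.range (p ^ s)).image fun b : ℕ => (1 + p ^ e * b : ZMod N)
  have hT (c : ℤ) : (1 + p ^ e * c : ZMod N) ∈ T := by
    have hps : (0 : ℤ) < p ^ s := by have := hp.pos; positivity
    have hc := Int.emod_nonneg c hps.ne'
    refine Finset.mem_image.2 ⟨(c % p ^ s).toNat, Finset.mem_range.2 ?_, ?_⟩
    · exact_mod_cast (Int.toNat_lt hc).2 (Int.emod_lt_of_pos c hps)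
    · have hN : (p : ZMod N) ^ (s + e) = 0 := by exact_mod_cast ZMod.natCast_self N
      have hcast : (((c % p ^ s).toNat : ℕ) : ZMod N) = ((c % p ^ s : ℤ) : ZMod N) := by
        exact_mod_cast congrArg (Int.cast : ℤ → ZMod N) (Int.toNat_of_nonneg hc)
      rw [hcast]
      conv_rhs => rw [← Int.emod_add_mul_ediv c (p ^ s)]
      push_cast
      rw [pow_add] at hN
      linear_combination (-(c / p ^ s : ℤ) : ZMod N) * hN
  have hinj : Set.InjOn (g ^ ·) (Finset.range (p ^ s)) := by
    simpa [← ZMod.orderOf_one_add_mul_prime_pow hp e he hpe w hw s] using pow_injOn_Iio_orderOf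
  have hgT : (Finset.range (p ^ s)).image (g ^ ·) = T := by
    refine Finset.eq_of_subset_of_card_le (fun x hx => ?_) ?_
    · obtain ⟨n, -, rfl⟩ := Finset.mem_image.1 hx
      obtain ⟨c, hc⟩ := Int.modEq_iff_add_fac.1
        ((Int.modEq_iff_dvd.2 ⟨-w, by ring⟩ : 1 + (p : ℤ) ^ e * w ≡ 1 [ZMOD p ^ e]).pow n)
      have := congrArg (fun x : ℤ => (x : ZMod N)) hc
      push_cast at this
      have hgn : g ^ n = 1 + p ^ e * ((-c : ℤ) : ZMod N) := by
        push_cast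
        linear_combination -this
      exact hgn ▸ hT (-c)
    · rw [Finset.card_image_of_injOn hinj, Finset.card_range]
      exact Finset.card_image_le.trans (Finset.card_range _).le
  obtain ⟨n, -, hn⟩ := Finset.mem_image.1 (hgT ▸ hT a)
  refine ⟨n, ?_⟩
  have := (ZMod.intCast_eq_intCast_iff ((1 + p ^ e * w) ^ n) (1 + p ^ e * a) N).1
    (by push_cast; exact hn)
  simpa [N] using this

namespace Collatz

theorem collatzT_two_mul (x : ℤ) : collatzT (2 * x) = x := by
  simp [collatzT]

theorem collatzT_two_mul_add_one (x : ℤ) : collatzT (2 * x + 1) = 3 * x + 2 := by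
  unfold collatzT
  rw [if_neg (by omega)]
  omega

theorem collatzT_of_three_mul_add_one_eq {x y : ℤ} (h : 3 * y + 1 = 2 * x) :
    collatzT y = x := by
  obtain ⟨w, rfl⟩ : ∃ w, y = 2 * w + 1 := ⟨y / 2, by omega⟩
  rw [collatzT_two_mul_add_one]
  omega

theorem collatzT_pos_iff {x : ℤ} : 0 < collatzT x ↔ 0 < x := by
  unfold collatzT
  split_ifs <;> omega

theorem collatzT_iterate_two_pow_mul (a : ℕ) (x : ℤ) : collatzT^[a] (2 ^ a * x) = x := by
  induction a with
  | zero => simp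
  | succ a ih => rw [Function.iterate_succ_apply, pow_succ', mul_assoc, collatzT_two_mul, ih]

theorem collatzT_iterate_affine (α : ℕ) (a : ℤ) :
    ∃ (j : ℕ) (d : ℤ), ∀ t : ℤ, collatzT^[α] (a + 2 ^ α * t) = d + 3 ^ j * t := by
  induction α generalizing a with
  | zero => exact ⟨0, a, fun t => by simp⟩
  | succ α ih =>
    rcases Int.even_or_odd' a with ⟨b, rfl | rfl⟩
    · obtain ⟨j, d, hjd⟩ := ih b
      refine ⟨j, d, fun t => ?_⟩
      rw [Function.iterate_succ_apply, show 2 * b + 2 ^ (α + 1) * t = 2 * (b + 2 ^ α * t) by ring,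
        collatzT_two_mul, hjd]
    · obtain ⟨j, d, hjd⟩ := ih (3 * b + 2)
      refine ⟨j + 1, d, fun t => ?_⟩
      rw [Function.iterate_succ_apply,
        show 2 * b + 1 + 2 ^ (α + 1) * t = 2 * (b + 2 ^ α * t) + 1 by ring,
        collatzT_two_mul_add_one,
        show 3 * (b + 2 ^ α * t) + 2 = 3 * b + 2 + 2 ^ α * (3 * t) by ring, hjd]
      ring

theorem exists_iterate_modEq_two {m : ℤ} (hm : 0 < m) : ∃ k, collatzT^[k] m ≡ 2 [ZMOD 3] := by
  obtain ⟨a, o, ⟨w, rfl⟩, hmo⟩ := Nat.exists_eq_two_pow_mul_odd (Int.natAbs_ne_zero.2 hm.ne')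
  have hm' : m = 2 ^ a * (2 * w + 1) := by
    rw [← Int.natAbs_of_nonneg hm.le, hmo]
    push_cast
    ring
  refine ⟨a + 1, ?_⟩
  rw [Function.iterate_succ_apply', hm', collatzT_iterate_two_pow_mul, collatzT_two_mul_add_one]
  exact Int.modEq_iff_dvd.2 ⟨-w, by ring⟩

def nonReaching : Set ℤ := {x | 0 < x ∧ ∀ k, collatzT^[k] x ≠ 1}

theorem preimage_nonReaching : collatzT ⁻¹' nonReaching = nonReaching := by
  ext x
  simp only [Set.mem_preimage, nonReaching, Set.mem_ofPred_eq, collatzT_pos_iff,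
    ← Function.iterate_succ_apply]
  refine and_congr_right fun _ => ⟨fun h k => ?_, fun h k => h _⟩
  cases k with
  | zero =>
    rintro rfl
    exact h 1 (by decide)
  | succ k => exact h k

/-- On a finite set, an injective self-map preserving `R` is onto `R`; this inverts both
branches on `R`, and their commutator `r ↦ r - 1/2` then sweeps out all of `ZMod n`. -/
theorem eq_univ_of_backward_closed {n : ℕ} [NeZero n] (h2 : IsUnit (2 : ZMod n))
    (h3 : IsUnit (3 : ZMod n)) {R : Set (ZMod n)} (hR : R.Nonempty)
    (hdouble : ∀ r ∈ R, 2 * r ∈ R) (hodd : ∀ r ∈ R, ∀ r', 3 * r' = 2 * r - 1 → r' ∈ R) :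
    R = Set.univ := by
  have hsurj {f : ZMod n → ZMod n} (hf : Function.Injective f) (hfR : Set.MapsTo f R R) :
      Set.SurjOn f R R :=
    (((Set.toFinite R).injOn_iff_bijOn_of_mapsTo hfR).1 hf.injOn).surjOn
  set i : ZMod n := ↑h2.unit⁻¹
  have hi : 2 * i = 1 := h2.mul_val_inv
  set g : ZMod n → ZMod n := fun r => ↑h3.unit⁻¹ * (2 * r - 1)
  have hg (r : ZMod n) : 3 * g r = 2 * r - 1 := by
    simp only [g, ← mul_assoc, h3.mul_val_inv, one_mul]
  have half (r) (hr : r ∈ R) : i * r ∈ R := by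
    obtain ⟨a, ha, rfl⟩ := hsurj h2.mul_right_injective hdouble hr
    rwa [← mul_assoc, mul_comm i, hi, one_mul]
  have up (r) (hr : r ∈ R) (x) (hx : 3 * r = 2 * x - 1) : x ∈ R := by
    have hginj : Function.Injective g := fun a b hab => h2.mul_right_injective <| by
      have := congrArg (3 * ·) hab
      simp only [hg] at this
      linear_combination this
    obtain ⟨a, ha, rfl⟩ := hsurj hginj (fun r hr => hodd r hr _ (hg r)) hr
    convert ha using 1
    exact h2.mul_right_injective (by linear_combination hx.symm.trans (hg a))
  have shift (r) (hr : r ∈ R) : r - i ∈ R := by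
    refine up _ (hdouble _ (hodd _ (half r hr) _ (hg _))) _ ?_
    linear_combination 2 * hg (i * r) + (2 * r + 1) * hi
  have shift_nat (k : ℕ) (r) (hr : r ∈ R) : r - k * i ∈ R := by
    induction k with
    | zero => simpa using hr
    | succ k ih => simpa [add_mul, sub_add_eq_sub_sub] using shift _ ih
  refine Set.eq_univ_of_forall fun d => ?_
  obtain ⟨r, hr⟩ := hR
  convert shift_nat ((r - d) * 2).val r hr
  rw [ZMod.natCast_zmod_val, mul_assoc, hi]
  ring

section BackwardClosed

variable {S : Set ℤ}

theorem mem_of_iterate_mem (hS : collatzT ⁻¹' S ⊆ S) {k : ℕ} {x : ℤ}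
    (h : collatzT^[k] x ∈ S) : x ∈ S := by
  induction k generalizing x with
  | zero => exact h
  | succ k ih => exact hS (ih h)

theorem two_pow_mul_mem (hS : collatzT ⁻¹' S ⊆ S) {x : ℤ} (hx : x ∈ S) (n : ℕ) :
    2 ^ n * x ∈ S :=
  mem_of_iterate_mem hS (by rwa [collatzT_iterate_two_pow_mul])

theorem four_pow_mul_mem (hS : collatzT ⁻¹' S ⊆ S) {x : ℤ} (hx : x ∈ S) (n : ℕ) :
    4 ^ n * x ∈ S := by
  simpa [pow_mul] using two_pow_mul_mem hS hx (2 * n)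

theorem mem_of_three_mul_add_one_eq (hS : collatzT ⁻¹' S ⊆ S) {x y : ℤ} (hx : x ∈ S)
    (h : 3 * y + 1 = 2 * x) : y ∈ S :=
  hS (by rwa [Set.mem_preimage, collatzT_of_three_mul_add_one_eq h])

/-- The constraint on `τ` is centred at `-1`, the fixed point of `y ↦ (2y - 1)/3`, so that the
odd inverse branch costs just one power of `3` (`MeetsClasses.descend`). -/
def MeetsClasses (S : Set ℤ) (Q δ : ℕ) (r : ZMod Q) : Prop :=
  ∀ (σ : ℕ) (τ : ℤ), τ ≡ -1 [ZMOD 3 ^ δ] → ∃ z ∈ S, (z : ZMod Q) = r ∧ z ≡ τ [ZMOD 3 ^ σ]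

namespace MeetsClasses

variable {Q δ : ℕ} {r : ZMod Q}

theorem mono (h : MeetsClasses S Q δ r) {δ' : ℕ} (hδ : δ ≤ δ') : MeetsClasses S Q δ' r :=
  fun σ τ hτ => h σ τ (hτ.of_dvd (pow_dvd_pow 3 hδ))

theorem two_mul (hS : collatzT ⁻¹' S ⊆ S) (h : MeetsClasses S Q 0 r) :
    MeetsClasses S Q 0 (2 * r) := by
  intro σ τ _
  -- `k + 1` inverts `2` modulo `3 ^ σ`
  obtain ⟨k, hk⟩ : Odd ((3 : ℤ) ^ σ) := Odd.pow (by decide)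
  obtain ⟨z, hz, hzr, hzτ⟩ := h σ (τ * (k + 1)) Int.modEq_one
  obtain ⟨u, hu⟩ := Int.modEq_iff_add_fac.1 hzτ.symm
  refine ⟨2 * z, by simpa using two_pow_mul_mem hS hz 1, by push_cast; rw [hzr], ?_⟩
  exact Int.modEq_iff_dvd.2 ⟨-(τ + 2 * u), by linear_combination -2 * hu + τ * hk⟩

theorem descend (hS : collatzT ⁻¹' S ⊆ S) (h3 : IsUnit (3 : ZMod Q))
    (h : MeetsClasses S Q (δ + 1) r) {r' : ZMod Q} (hr : 3 * r' = 2 * r - 1) :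
    MeetsClasses S Q δ r' := by
  intro σ τ hτ
  obtain ⟨t, rfl⟩ := Int.modEq_iff_add_fac.1 hτ.symm
  -- `k + 1` inverts `2` modulo `3 ^ (σ + 1)`; the target below is `(3τ + 1)/2` modulo `3 ^ (σ + 1)`
  obtain ⟨k, hk⟩ : Odd ((3 : ℤ) ^ (σ + 1)) := Odd.pow (by decide)
  obtain ⟨z, hz, hzr, hzτ⟩ := h (σ + 1) (-1 + 3 ^ (δ + 1) * t * (k + 1))
    (Int.modEq_iff_dvd.2 ⟨-t * (k + 1), by ring⟩)
  obtain ⟨u, hu⟩ := Int.modEq_iff_add_fac.1 hzτ.symm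
  set y := -1 + 3 ^ δ * t + 3 ^ σ * (3 ^ (δ + 1) * t + 2 * u)
  have hy : 3 * y + 1 = 2 * z := by
    simp only [y]
    linear_combination (-2 : ℤ) * hu + 3 ^ (δ + 1) * t * hk
  refine ⟨y, mem_of_three_mul_add_one_eq hS hz hy, h3.mul_left_cancel ?_,
    Int.modEq_iff_dvd.2 ⟨-(3 ^ (δ + 1) * t + 2 * u), by ring⟩⟩
  have := congrArg (Int.cast : ℤ → ZMod Q) hy
  push_cast at this
  linear_combination this - hr + 2 * hzr

end MeetsClasses

theorem exists_meetsClasses_zero (hS : collatzT ⁻¹' S ⊆ S) {Q : ℕ} (h3 : IsUnit (3 : ZMod Q))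
    {δ : ℕ} {r : ZMod Q} (h : MeetsClasses S Q δ r) : ∃ r', MeetsClasses S Q 0 r' := by
  induction δ generalizing r with
  | zero => exact ⟨r, h⟩
  | succ δ ih =>
    refine ih (h.descend hS h3 (r' := ↑h3.unit⁻¹ * (2 * r - 1)) ?_)
    rw [← mul_assoc, h3.mul_val_inv, one_mul]

/-- The elements are `P * g ^ j` with `P = 4 ^ t₀ * z₀ ≡ -1 (mod 3 ^ e)` and
`g = 4 ^ φ(Q) = 1 + 3 ^ e * w`: since `g ≡ 1 (mod Q)` they all lie over `P` modulo `Q`, while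
`3`-adically they cover the class of `P` modulo `3 ^ e`. -/
theorem exists_meetsClasses (hS : collatzT ⁻¹' S ⊆ S) {z₀ : ℤ} (hz₀ : z₀ ∈ S)
    (hz₀3 : z₀ ≡ 2 [ZMOD 3]) {Q : ℕ} (hQ : Nat.Coprime 2 Q) : ∃ δ r, MeetsClasses S Q δ r := by
  have hQ0 : Q ≠ 0 := by rintro rfl; simp at hQ
  set φ := Q.totient
  have hφ : (4 : ZMod Q) ^ φ = 1 := by
    exact_mod_cast (ZMod.natCast_eq_natCast_iff _ _ _).2 (Nat.ModEq.pow_totient (hQ.pow_left 2))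
  obtain ⟨e, w, he, hw, hg⟩ := Int.exists_eq_one_add_pow_mul (p := 3) (x := 4 ^ φ) (by decide)
    (by simpa using (show (4 : ℤ) ≡ 1 [ZMOD 3] by decide).pow φ)
    (one_lt_pow₀ (by norm_num) (Nat.totient_pos.2 (Nat.pos_of_ne_zero hQ0)).ne').ne'
  obtain ⟨v, hv⟩ := (Int.isCoprime_three_pow_of_not_dvd (x := z₀)
    (by unfold Int.ModEq at hz₀3; omega) e).exists_mul_modEq_one
  have hv2 : v % 3 = 2 := by
    have := (hz₀3.mul_right v).symm.trans (hv.of_dvd (dvd_pow_self 3 he))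
    unfold Int.ModEq at this
    omega
  obtain ⟨t₀, ht₀⟩ := Int.exists_pow_modEq_one_add_mul Nat.prime_three one_ne_zero
    (by norm_num) (w := 1) (by norm_num) (e - 1) ((-v - 1) / 3)
  have h4 : (4 : ℤ) ^ t₀ ≡ -v [ZMOD 3 ^ e] := by
    have hv' : 1 + 3 * ((-v - 1) / 3) = -v := by omega
    rw [Nat.sub_add_cancel (Nat.one_le_iff_ne_zero.2 he)] at ht₀
    simpa [hv'] using ht₀
  set P := 4 ^ t₀ * z₀
  have hP : P ≡ -1 [ZMOD 3 ^ e] :=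
    calc 4 ^ t₀ * z₀ ≡ -v * z₀ [ZMOD 3 ^ e] := h4.mul_right z₀
      _ = -(z₀ * v) := by ring
      _ ≡ -1 [ZMOD 3 ^ e] := hv.neg
  refine ⟨e, P, fun σ τ hτ => ?_⟩
  have hP3 := hP.of_dvd (dvd_pow_self 3 he)
  obtain ⟨u, hu⟩ := (Int.isCoprime_three_pow_of_not_dvd (x := P)
    (by unfold Int.ModEq at hP3; omega) (σ + e)).exists_mul_modEq_one
  have hτu : τ * u ≡ 1 [ZMOD 3 ^ e] := (hτ.mul_right u).trans
    ((hP.symm.mul_right u).trans (hu.of_dvd (pow_dvd_pow 3 (Nat.le_add_left e σ))))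
  obtain ⟨b, hb⟩ := Int.modEq_iff_add_fac.1 hτu.symm
  obtain ⟨j, hj⟩ := Int.exists_pow_modEq_one_add_mul Nat.prime_three he (by omega) (w := w)
    (by exact_mod_cast hw) σ b
  push_cast at hj
  refine ⟨P * (4 ^ φ) ^ j, ?_, ?_, ?_⟩
  · have : P * (4 ^ φ) ^ j = 4 ^ (t₀ + φ * j) * z₀ := by rw [pow_add, pow_mul]; ring
    exact this ▸ four_pow_mul_mem hS hz₀ _
  · push_cast
    rw [hφ, one_pow, mul_one]
  · rw [hg]
    refine Int.ModEq.of_dvd (pow_dvd_pow 3 (Nat.le_add_right σ e)) ?_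
    calc P * (1 + 3 ^ e * w) ^ j ≡ P * (τ * u) [ZMOD 3 ^ (σ + e)] :=
          (hj.trans (by rw [hb])).mul_left P
      _ = τ * (P * u) := by ring
      _ ≡ τ * 1 [ZMOD 3 ^ (σ + e)] := hu.mul_left τ
      _ = τ := mul_one τ

theorem meetsClasses_zero (hS : collatzT ⁻¹' S ⊆ S) {z₀ : ℤ} (hz₀ : z₀ ∈ S)
    (hz₀3 : z₀ ≡ 2 [ZMOD 3]) {Q : ℕ} (hQ : Nat.Coprime 6 Q) (r : ZMod Q) :
    MeetsClasses S Q 0 r := by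
  have : NeZero Q := ⟨by rintro rfl; simp at hQ⟩
  have h2 : IsUnit (2 : ZMod Q) := by
    exact_mod_cast (ZMod.isUnit_iff_coprime 2 Q).2 (Nat.Coprime.coprime_dvd_left (by norm_num) hQ)
  have h3 : IsUnit (3 : ZMod Q) := by
    exact_mod_cast (ZMod.isUnit_iff_coprime 3 Q).2 (Nat.Coprime.coprime_dvd_left (by norm_num) hQ)
  obtain ⟨δ, r₀, h₀⟩ :=
    exists_meetsClasses hS hz₀ hz₀3 (Nat.Coprime.coprime_dvd_left (by norm_num) hQ)
  obtain ⟨r₁, h₁⟩ := exists_meetsClasses_zero hS h3 h₀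
  have := eq_univ_of_backward_closed h2 h3 (R := {r | MeetsClasses S Q 0 r}) ⟨r₁, h₁⟩
    (fun _ hr => hr.two_mul hS) (fun _ hr _ hr' => (hr.mono zero_le_one).descend hS h3 hr')
  exact Set.eq_univ_iff_forall.1 this r

theorem exists_mem_modEq (hS : collatzT ⁻¹' S ⊆ S) {z₀ : ℤ} (hz₀ : z₀ ∈ S)
    (hz₀3 : z₀ ≡ 2 [ZMOD 3]) {M : ℕ} (hM : Odd M) (d : ℤ) : ∃ z ∈ S, z ≡ d [ZMOD M] := by
  obtain ⟨s, Q, hQ3, rfl⟩ := Nat.exists_eq_pow_mul_and_not_dvd hM.pos.ne' 3 (by norm_num)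
  have hQ3' : Nat.Coprime 3 Q := (Nat.Prime.coprime_iff_not_dvd Nat.prime_three).2 hQ3
  have hQ : Nat.Coprime 6 Q :=
    Nat.Coprime.mul_left (Nat.coprime_two_left.2 (Nat.Odd.of_mul_right hM)) hQ3'
  obtain ⟨z, hz, hzQ, hz3⟩ := meetsClasses_zero hS hz₀ hz₀3 hQ d s d Int.modEq_one
  refine ⟨z, hz, ?_⟩
  push_cast
  refine (Int.modEq_and_modEq_iff_modEq_mul ?_).1 ⟨hz3, (ZMod.intCast_eq_intCast_iff _ _ _).1 hzQ⟩
  simpa [Int.natAbs_pow] using hQ3'.pow_left s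

theorem exists_mem_gt_modEq (hS : collatzT ⁻¹' S ⊆ S) (hpos : ∀ x ∈ S, 0 < x) {z₀ : ℤ}
    (hz₀ : z₀ ∈ S) (hz₀3 : z₀ ≡ 2 [ZMOD 3]) {M : ℕ} (hM : Odd M) (d N : ℤ) :
    ∃ z ∈ S, N < z ∧ z ≡ d [ZMOD M] := by
  obtain ⟨z, hz, hzd⟩ := exists_mem_modEq hS hz₀ hz₀3 hM d
  have hφ : 2 ^ M.totient ≡ 1 [ZMOD M] := by
    exact_mod_cast Int.natCast_modEq_iff.2 (Nat.ModEq.pow_totient (Nat.coprime_two_left.2 hM))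
  have hφ0 : 0 < M.totient := Nat.totient_pos.2 hM.pos
  set k := N.toNat
  refine ⟨2 ^ (M.totient * k) * z, two_pow_mul_mem hS hz _, ?_, ?_⟩
  · have h1 : (k : ℤ) < 2 ^ k := by exact_mod_cast Nat.lt_two_pow_self
    have h2 : (2 : ℤ) ^ k ≤ 2 ^ (M.totient * k) :=
      pow_le_pow_right₀ (by norm_num) (Nat.le_mul_of_pos_left k hφ0)
    have h3 : (2 : ℤ) ^ (M.totient * k) ≤ 2 ^ (M.totient * k) * z :=
      le_mul_of_one_le_right (by positivity) (hpos z hz)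
    linarith [Int.self_le_toNat N]
  · calc 2 ^ (M.totient * k) * z = (2 ^ M.totient) ^ k * z := by rw [pow_mul]
      _ ≡ 1 ^ k * z [ZMOD M] := (hφ.pow k).mul_right z
      _ = z := by rw [one_pow, one_mul]
      _ ≡ d [ZMOD M] := hzd

theorem exists_add_mul_mem (hS : collatzT ⁻¹' S ⊆ S) (hpos : ∀ x ∈ S, 0 < x) {z₀ : ℤ}
    (hz₀ : z₀ ∈ S) (hz₀3 : z₀ ≡ 2 [ZMOD 3]) (A : ℤ) {B : ℤ} (hB : 0 < B) :
    ∃ n : ℕ, A + B * n ∈ S := by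
  obtain ⟨α, M, hM, hBM⟩ := Nat.exists_eq_two_pow_mul_odd (n := B.toNat) (by omega)
  have hBM' : B = 2 ^ α * M := by
    rw [← Int.toNat_of_nonneg hB.le, hBM]
    push_cast
    ring
  obtain ⟨j, d, hjd⟩ := collatzT_iterate_affine α A
  obtain ⟨z, hz, hdz, hzd⟩ := exists_mem_gt_modEq hS hpos hz₀ hz₀3
    ((Odd.pow (by decide : Odd 3)).mul hM : Odd (3 ^ j * M)) d d
  obtain ⟨u, rfl⟩ := Int.modEq_iff_add_fac.1 hzd.symm
  have hu : 0 < u := by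
    push_cast at hdz
    have : (0 : ℤ) < 3 ^ j * M := by have := hM.pos; positivity
    nlinarith
  refine ⟨u.toNat, mem_of_iterate_mem hS (k := α) ?_⟩
  rw [Int.toNat_of_nonneg hu.le, hBM', mul_assoc, hjd]
  push_cast at hz ⊢
  rwa [← mul_assoc]

end BackwardClosed

end Collatz

theorem monks_arith_progression_sufficiency_general (A B : ℤ) (hB : 1 ≤ B)
    (hprog : ∀ n : ℕ, 0 < A + B * n → ∃ k : ℕ, collatzT^[k] (A + B * n) = 1) :
    ∀ m : ℤ, 0 < m → ∃ k : ℕ, collatzT^[k] m = 1 := by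
  intro m hm
  by_contra! hm1
  have hS := Collatz.preimage_nonReaching
  obtain ⟨i, hi⟩ := Collatz.exists_iterate_modEq_two hm
  have hz₀ : collatzT^[i] m ∈ Collatz.nonReaching :=
    Set.MapsTo.iterate hS.symm.subset i ⟨hm, hm1⟩
  obtain ⟨n, hn⟩ := Collatz.exists_add_mul_mem hS.subset (fun _ hx => hx.1) hz₀ hi A
    (by omega : 0 < B)
  obtain ⟨k, hk⟩ := hprog n hn.1
  exact hn.2 k hk

/-- (K. M. Monks, 2006) If the 3x+1 conjecture holds on the arithmetic progression
{A + Bn : n ≥ 0} (A ≥ 0, B ≥ 1), then it holds for all positive integers. -/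
theorem monks_arith_progression_sufficiency (A B : ℤ) (hA : 0 ≤ A) (hB : 1 ≤ B)
    (hprog : ∀ n : ℕ, 0 < A + B * n → ∃ k : ℕ, collatzT^[k] (A + B * n) = 1) :
    ∀ m : ℤ, 0 < m → ∃ k : ℕ, collatzT^[k] m = 1 :=
  monks_arith_progression_sufficiency_general A B hB hprog
end

section
/- If every positive integer n with n ≡ 1 (mod 16) has some iterate T^(k)(n) = 1, then every positive integer m has some iterate T^(k)(m) = 1. -/
lemma stepEven (x y : ℤ) (hy : x = 2 * y) : collatzT x = y := by
  unfold collatzT; rw [if_pos (by omega)]; omega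

lemma stepOdd (x y : ℤ) (h1 : x % 2 = 1) (h2 : 3 * x + 1 = 2 * y) : collatzT x = y := by
  unfold collatzT; rw [if_neg (by omega)]; omega

lemma iter_one_mem (t : ℕ) : collatzT^[t] 1 = 1 ∨ collatzT^[t] 1 = 2 := by
  induction t with
  | zero => left; rfl
  | succ n ih =>
    rw [Function.iterate_succ_apply']
    rcases ih with h | h <;> rw [h]
    · right; exact stepOdd 1 2 (by norm_num) (by norm_num)
    · left; exact stepEven 2 1 (by norm_num)

lemma reach_of_path (n x : ℤ) (j : ℕ) (hp : collatzT^[j] n = x)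
    (hr : ∃ k, collatzT^[k] n = 1) : ∃ k, collatzT^[k] x = 1 := by
  obtain ⟨k, hk⟩ := hr
  rcases le_or_gt j k with hle | hlt
  · refine ⟨k - j, ?_⟩
    rw [← hp, ← Function.iterate_add_apply, Nat.sub_add_cancel hle, hk]
  · have : x = collatzT^[j - k] 1 := by
      rw [← hk, ← Function.iterate_add_apply, Nat.sub_add_cancel hlt.le, hp]
    rcases iter_one_mem (j - k) with h | h
    · exact ⟨0, by simp [this, h]⟩
    · refine ⟨1, ?_⟩
      simp only [Function.iterate_one, this, h]
      exact stepEven 2 1 (by norm_num)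

lemma key_cases (x : ℤ) (hx : 0 < x) (h3 : x % 3 ≠ 0) :
    ∃ n j, collatzT^[j] n = x ∧ ((n % 16 = 1 ∧ 0 < n) ∨ (0 < n ∧ n < x ∧ n % 3 ≠ 0)) := by
  have hc : x % 9 = 1 ∨ x % 9 = 4 ∨ x % 9 = 5 ∨ x % 9 = 7 ∨ x % 24 = 2 ∨ (x % 9 = 2 ∨ x % 9 = 8) := by omega
  rcases hc with h|h|h|h|h|h
  -- x % 9 = 1, word DUDU, hit
  · obtain ⟨t0, ht0⟩ : ∃ t, 3 * t = 2 * (2 * (x)) - 1 := ⟨(2 * (2 * (x)) - 1) / 3, by omega⟩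
    obtain ⟨t1, ht1⟩ : ∃ t, 3 * t = 2 * (2 * (t0)) - 1 := ⟨(2 * (2 * (t0)) - 1) / 3, by omega⟩
    refine ⟨t1, 4, ?_, ?_⟩
    ·
      have f0 : collatzT (t1) = 2 * (t0) := stepOdd _ _ (by omega) (by omega)
      have f1 : collatzT (2 * (t0)) = t0 := stepEven _ _ rfl
      have f2 : collatzT (t0) = 2 * (x) := stepOdd _ _ (by omega) (by omega)
      have f3 : collatzT (2 * (x)) = x := stepEven _ _ rfl
      have hiter : collatzT^[4] (t1) = collatzT (collatzT (collatzT (collatzT (t1)))) := rfl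
      rw [hiter, f0, f1, f2, f3]
    · exact Or.inl ⟨by omega, by omega⟩
  -- x % 9 = 4, word DDDDDUDU, hit
  · obtain ⟨t0, ht0⟩ : ∃ t, 3 * t = 2 * (2 * (2 * (2 * (2 * (2 * (x)))))) - 1 := ⟨(2 * (2 * (2 * (2 * (2 * (2 * (x)))))) - 1) / 3, by omega⟩
    obtain ⟨t1, ht1⟩ : ∃ t, 3 * t = 2 * (2 * (t0)) - 1 := ⟨(2 * (2 * (t0)) - 1) / 3, by omega⟩
    refine ⟨t1, 8, ?_, ?_⟩
    ·
      have f0 : collatzT (t1) = 2 * (t0) := stepOdd _ _ (by omega) (by omega)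
      have f1 : collatzT (2 * (t0)) = t0 := stepEven _ _ rfl
      have f2 : collatzT (t0) = 2 * (2 * (2 * (2 * (2 * (x))))) := stepOdd _ _ (by omega) (by omega)
      have f3 : collatzT (2 * (2 * (2 * (2 * (2 * (x)))))) = 2 * (2 * (2 * (2 * (x)))) := stepEven _ _ rfl
      have f4 : collatzT (2 * (2 * (2 * (2 * (x))))) = 2 * (2 * (2 * (x))) := stepEven _ _ rfl
      have f5 : collatzT (2 * (2 * (2 * (x)))) = 2 * (2 * (x)) := stepEven _ _ rfl
      have f6 : collatzT (2 * (2 * (x))) = 2 * (x) := stepEven _ _ rfl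
      have f7 : collatzT (2 * (x)) = x := stepEven _ _ rfl
      have hiter : collatzT^[8] (t1) = collatzT (collatzT (collatzT (collatzT (collatzT (collatzT (collatzT (collatzT (t1)))))))) := rfl
      rw [hiter, f0, f1, f2, f3, f4, f5, f6, f7]
    · exact Or.inl ⟨by omega, by omega⟩
  -- x % 9 = 5, word DDUDU, hit
  · obtain ⟨t0, ht0⟩ : ∃ t, 3 * t = 2 * (2 * (2 * (x))) - 1 := ⟨(2 * (2 * (2 * (x))) - 1) / 3, by omega⟩
    obtain ⟨t1, ht1⟩ : ∃ t, 3 * t = 2 * (2 * (t0)) - 1 := ⟨(2 * (2 * (t0)) - 1) / 3, by omega⟩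
    refine ⟨t1, 5, ?_, ?_⟩
    ·
      have f0 : collatzT (t1) = 2 * (t0) := stepOdd _ _ (by omega) (by omega)
      have f1 : collatzT (2 * (t0)) = t0 := stepEven _ _ rfl
      have f2 : collatzT (t0) = 2 * (2 * (x)) := stepOdd _ _ (by omega) (by omega)
      have f3 : collatzT (2 * (2 * (x))) = 2 * (x) := stepEven _ _ rfl
      have f4 : collatzT (2 * (x)) = x := stepEven _ _ rfl
      have hiter : collatzT^[5] (t1) = collatzT (collatzT (collatzT (collatzT (collatzT (t1))))) := rfl
      rw [hiter, f0, f1, f2, f3, f4]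
    · exact Or.inl ⟨by omega, by omega⟩
  -- x % 9 = 7, word DDDUDU, hit
  · obtain ⟨t0, ht0⟩ : ∃ t, 3 * t = 2 * (2 * (2 * (2 * (x)))) - 1 := ⟨(2 * (2 * (2 * (2 * (x)))) - 1) / 3, by omega⟩
    obtain ⟨t1, ht1⟩ : ∃ t, 3 * t = 2 * (2 * (t0)) - 1 := ⟨(2 * (2 * (t0)) - 1) / 3, by omega⟩
    refine ⟨t1, 6, ?_, ?_⟩
    ·
      have f0 : collatzT (t1) = 2 * (t0) := stepOdd _ _ (by omega) (by omega)
      have f1 : collatzT (2 * (t0)) = t0 := stepEven _ _ rfl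
      have f2 : collatzT (t0) = 2 * (2 * (2 * (x))) := stepOdd _ _ (by omega) (by omega)
      have f3 : collatzT (2 * (2 * (2 * (x)))) = 2 * (2 * (x)) := stepEven _ _ rfl
      have f4 : collatzT (2 * (2 * (x))) = 2 * (x) := stepEven _ _ rfl
      have f5 : collatzT (2 * (x)) = x := stepEven _ _ rfl
      have hiter : collatzT^[6] (t1) = collatzT (collatzT (collatzT (collatzT (collatzT (collatzT (t1)))))) := rfl
      rw [hiter, f0, f1, f2, f3, f4, f5]
    · exact Or.inl ⟨by omega, by omega⟩
  -- x % 24 = 2, word U, hit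
  · obtain ⟨t0, ht0⟩ : ∃ t, 3 * t = 2 * (x) - 1 := ⟨(2 * (x) - 1) / 3, by omega⟩
    refine ⟨t0, 1, ?_, ?_⟩
    ·
      have f0 : collatzT (t0) = x := stepOdd _ _ (by omega) (by omega)
      have hiter : collatzT^[1] (t0) = collatzT (t0) := rfl
      rw [hiter, f0]
    · exact Or.inl ⟨by omega, by omega⟩
  -- (x % 9 = 2 ∨ x % 9 = 8), word U, less
  · obtain ⟨t0, ht0⟩ : ∃ t, 3 * t = 2 * (x) - 1 := ⟨(2 * (x) - 1) / 3, by omega⟩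
    refine ⟨t0, 1, ?_, ?_⟩
    ·
      have f0 : collatzT (t0) = x := stepOdd _ _ (by omega) (by omega)
      have hiter : collatzT^[1] (t0) = collatzT (t0) := rfl
      rw [hiter, f0]
    · exact Or.inr ⟨by omega, by omega, by omega⟩

lemma key_all (h : ∀ n : ℤ, 0 < n → n % 16 = 1 → ∃ k : ℕ, collatzT^[k] n = 1) :
    ∀ N : ℕ, ∀ x : ℤ, x.natAbs ≤ N → 0 < x → x % 3 ≠ 0 → ∃ k, collatzT^[k] x = 1 := by
  intro N
  induction N with
  | zero => intro x hN hx _; omega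
  | succ N ih =>
    intro x hN hx h3
    obtain ⟨n, j, hpath, hcase⟩ := key_cases x hx h3
    rcases hcase with ⟨h16, hn⟩ | ⟨hn, hlt, hn3⟩
    · exact reach_of_path n x j hpath (h n hn h16)
    · exact reach_of_path n x j hpath (ih n (by omega) hn hn3)

lemma three_free : ∀ N : ℕ, ∀ m : ℤ, m.natAbs ≤ N → 0 < m →
    ∃ i, 0 < collatzT^[i] m ∧ collatzT^[i] m % 3 ≠ 0 := by
  intro N
  induction N with
  | zero => intro m hN hm; omega
  | succ N ih =>
    intro m hN hm
    by_cases h3 : m % 3 = 0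
    · rcases Int.even_or_odd m with ⟨y, hy⟩ | ⟨y, hy⟩
      · have hstep : collatzT m = y := stepEven m y (by omega)
        obtain ⟨i, hi1, hi2⟩ := ih y (by omega) (by omega)
        refine ⟨i + 1, ?_, ?_⟩ <;>
          rw [Function.iterate_add_apply, Function.iterate_one, hstep] <;> assumption
      · obtain ⟨z, hz⟩ : ∃ z, 3 * m + 1 = 2 * z := ⟨(3 * m + 1) / 2, by omega⟩
        have hstep : collatzT m = z := stepOdd m z (by omega) hz
        refine ⟨1, ?_, ?_⟩ <;> rw [Function.iterate_one, hstep] <;> omega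
    · exact ⟨0, hm, h3⟩

/-- (Andaloro, 2000) If every positive integer n ≡ 1 (mod 16) has some iterate
T^(k)(n) = 1, then every positive integer m has some iterate T^(k)(m) = 1. -/
theorem andaloro_one_mod_sixteen_sufficiency
    (h : ∀ n : ℤ, 0 < n → n % 16 = 1 → ∃ k : ℕ, collatzT^[k] n = 1) :
    ∀ m : ℤ, 0 < m → ∃ k : ℕ, collatzT^[k] m = 1 := by
  intro m hm
  obtain ⟨i, hy1, hy2⟩ := three_free m.natAbs m le_rfl hm
  obtain ⟨k, hk⟩ := key_all h (collatzT^[i] m).natAbs _ le_rfl hy1 hy2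
  exact ⟨k + i, by rw [Function.iterate_add_apply, hk]⟩
end

section
/- Define U: ℝ → ℝ by U(x) = (3x+1)/2 if ⌊x⌋ is odd, and U(x) = x/2 if ⌊x⌋ is even. If x > 0 is a real number that is periodic under U, i.e., U^(k)(x) = x for some integer k ≥ 1, then x is a positive integer. Hence the only periodic orbits of U on the positive real numbers are its periodic orbits on the positive integers. -/
/-- The real 3x+1 function U(x) = (3x+1)/2 if ⌊x⌋ is odd, x/2 if ⌊x⌋ is even. -/
noncomputable def realU (x : ℝ) : ℝ := if Odd ⌊x⌋ then (3 * x + 1) / 2 else x / 2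

lemma realU_step (y : ℝ) : ∃ (a c d : ℕ),
    realU y = (3 ^ a * y + c) / 2 ∧
    Int.fract (realU y) = (3 ^ a * Int.fract y - d) / 2 := by
  set f := Int.fract y with hf
  have hy : y = (⌊y⌋ : ℝ) + f := by rw [hf]; rw [Int.fract]; ring
  have hf0 : 0 ≤ f := Int.fract_nonneg y
  have hf1 : f < 1 := Int.fract_lt_one y
  by_cases h : Odd ⌊y⌋
  · obtain ⟨t, ht⟩ := h
    have hU : realU y = ((3 * t + 2 : ℤ) : ℝ) + 3 * f / 2 := by
      rw [realU, if_pos ⟨t, ht⟩]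
      rw [hy, ht]; push_cast; ring
    by_cases h2 : 3 * f / 2 < 1
    · refine ⟨1, 1, 0, ?_, ?_⟩
      · rw [realU, if_pos ⟨t, ht⟩]; push_cast; ring
      · rw [hU, Int.fract_intCast_add, Int.fract_eq_self.mpr ⟨by positivity, h2⟩]
        push_cast; ring
    · refine ⟨1, 1, 2, ?_, ?_⟩
      · rw [realU, if_pos ⟨t, ht⟩]; push_cast; ring
      · push_neg at h2
        have : 3 * f / 2 = (3 * f / 2 - 1) + (1 : ℤ) := by push_cast; ring
        rw [hU, Int.fract_intCast_add, this, Int.fract_add_intCast,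
          Int.fract_eq_self.mpr ⟨by linarith, by linarith⟩]
        push_cast; ring
  · obtain ⟨t, ht⟩ := Int.not_odd_iff_even.mp h
    refine ⟨0, 0, 0, ?_, ?_⟩
    · rw [realU, if_neg h]; push_cast; ring
    · have hU : realU y = (t : ℝ) + f / 2 := by
        rw [realU, if_neg h]
        rw [hy, ht]; push_cast; ring
      rw [hU, Int.fract_intCast_add, Int.fract_eq_self.mpr ⟨by positivity, by linarith⟩]
      push_cast; ring

lemma realU_iter (x : ℝ) (k : ℕ) : ∃ (m c d : ℕ),
    realU^[k] x = (3 ^ m * x + c) / 2 ^ k ∧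
    Int.fract (realU^[k] x) = (3 ^ m * Int.fract x - d) / 2 ^ k := by
  induction k with
  | zero => exact ⟨0, 0, 0, by simp, by simp⟩
  | succ k ih =>
    obtain ⟨m, c, d, h1, h2⟩ := ih
    obtain ⟨a, c1, d1, g1, g2⟩ := realU_step (realU^[k] x)
    refine ⟨a + m, 3 ^ a * c + c1 * 2 ^ k, 3 ^ a * d + d1 * 2 ^ k, ?_, ?_⟩
    · rw [Function.iterate_succ_apply', g1, h1]
      push_cast
      field_simp
      ring
    · rw [Function.iterate_succ_apply', g2, h2]
      push_cast
      field_simp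
      ring

/-- (Konstadinidis, 2006) The only periodic points of U on the positive reals
are the positive integers: if x > 0 and U^(k)(x) = x for some k ≥ 1, then x is
a positive integer. -/
theorem real_3x1_periodic_points_are_integers (x : ℝ) (hx : 0 < x)
    (k : ℕ) (hk : 1 ≤ k) (hper : realU^[k] x = x) :
    ∃ n : ℕ, 0 < n ∧ x = n := by
  obtain ⟨m, c, d, h1, h2⟩ := realU_iter x k
  rw [hper] at h1 h2
  have h2k : (0:ℝ) < 2 ^ k := by positivity
  have hxe : x * (2 ^ k - 3 ^ m) = c := by field_simp at h1; linarith
  have hfe : Int.fract x * (2 ^ k - 3 ^ m) = -d := by field_simp at h2; linarith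
  -- show 2^k > 3^m in ℝ
  have hgt : (3:ℝ) ^ m < 2 ^ k := by
    rcases lt_trichotomy ((3:ℝ) ^ m) (2 ^ k) with h | h | h
    · exact h
    · exfalso
      have he : (2:ℕ) ^ k = 3 ^ m := by exact_mod_cast h.symm
      have heven : Even ((2:ℕ) ^ k) := (Nat.even_pow).mpr ⟨even_two, by omega⟩
      have hodd : Odd ((3:ℕ) ^ m) := Odd.pow ⟨1, rfl⟩
      rw [he] at heven
      exact (Nat.not_even_iff_odd.mpr hodd) heven
    · exfalso
      have : x * (2 ^ k - 3 ^ m) < 0 := mul_neg_of_pos_of_neg hx (by linarith)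
      have : (c:ℝ) < 0 := by linarith [hxe]
      exact absurd this (Nat.cast_nonneg c).not_gt
  have hf0 : Int.fract x = 0 := by
    have hnn : 0 ≤ Int.fract x := Int.fract_nonneg x
    have : Int.fract x * (2 ^ k - 3 ^ m) ≥ 0 := mul_nonneg hnn (by linarith)
    have hd : (d:ℝ) = 0 := by
      have : -(d:ℝ) ≥ 0 := by linarith [hfe]
      have : (d:ℝ) ≤ 0 := by linarith
      linarith [Nat.cast_nonneg (α := ℝ) d]
    nlinarith
  have hfl : x = (⌊x⌋ : ℝ) := by
    rw [Int.fract] at hf0; linarith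
  have hpos : 0 < ⌊x⌋ := by
    have : (0:ℝ) < (⌊x⌋:ℝ) := hfl ▸ hx
    exact_mod_cast this
  obtain ⟨n, hn⟩ : ∃ n : ℕ, ⌊x⌋ = (n : ℤ) := ⟨⌊x⌋.toNat, by omega⟩
  exact ⟨n, by omega, by rw [hfl, hn]; norm_cast⟩
end

section
/- Define the map C₁ on the polynomial ring 𝔽₂[x] over the field with two elements by C₁(f) = (x+1)·f + 1 if f(0) ≠ 0, and C₁(f) = f/x if f(0) = 0. Then for every polynomial f ∈ 𝔽₂[x] of degree n, some iterate C₁^(k)(f) with k ≤ n² + 2n is a constant polynomial. -/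
open Polynomial

/-- The polynomial 3x+1 analogue map on 𝔽₂[x]:
C₁(f) = (x+1)·f + 1 if f(0) ≠ 0, and C₁(f) = f/x if f(0) = 0. -/
noncomputable def polyC1 (f : Polynomial (ZMod 2)) : Polynomial (ZMod 2) :=
  if f.coeff 0 ≠ 0 then (X + 1) * f + 1 else f.divX

private lemma two_eq_zero' : (2 : Polynomial (ZMod 2)) = 0 := by
  rw [show (2 : Polynomial (ZMod 2)) = C 2 from (map_ofNat C 2).symm,
    show (2 : ZMod 2) = 0 by decide, map_zero]

private lemma zmod2_ne (a : ZMod 2) (h : a ≠ 0) : a = 1 := by revert h; revert a; decide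

private lemma polyC1_odd (f : Polynomial (ZMod 2)) (h : f.coeff 0 = 1) :
    polyC1 f = (X + 1) * f + 1 := by
  rw [polyC1, if_pos]; rw [h]; exact one_ne_zero

private lemma polyC1_even (f : Polynomial (ZMod 2)) (h : f.coeff 0 = 0) :
    polyC1 f = f.divX := by
  rw [polyC1, if_neg]; simp [h]

private lemma divX_X_mul (v : Polynomial (ZMod 2)) : (X * v).divX = v := by
  ext n; simp [coeff_divX, coeff_X_mul]

/-- From an even polynomial of natDegree ≤ d, constants are reached in ≤ d² steps,
assuming the odd statement for smaller degrees. -/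
private lemma evenAux : ∀ d : ℕ,
    (∀ m, m < d → ∀ f : Polynomial (ZMod 2), f.coeff 0 = 1 → f.natDegree = m →
      ∃ k, k ≤ m ^ 2 + 2 * m ∧ (polyC1^[k] f).degree ≤ 0) →
    ∀ v : Polynomial (ZMod 2), v.coeff 0 = 0 → v.natDegree ≤ d →
      ∃ k, k ≤ d ^ 2 ∧ (polyC1^[k] v).degree ≤ 0 := by
  intro d
  induction d with
  | zero =>
    intro _ v _ hdeg
    refine ⟨0, le_refl _, ?_⟩
    simpa using (degree_le_natDegree (p := v)).trans (by exact_mod_cast Nat.cast_le.mpr hdeg)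
  | succ d IH =>
    intro HO v hv hdeg
    set w := v.divX with hw
    have hstep : polyC1 v = w := polyC1_even v hv
    have hwdeg : w.natDegree ≤ d := by
      rw [hw, natDegree_divX_eq_natDegree_tsub_one]; omega
    by_cases hw0 : w.coeff 0 = 0
    · obtain ⟨k, hk, hr⟩ := IH (fun m hm => HO m (hm.trans (Nat.lt_succ_self d))) w hw0 hwdeg
      refine ⟨k + 1, by nlinarith, ?_⟩
      rwa [Function.iterate_add_apply, Function.iterate_one, hstep]
    · have hw1 : w.coeff 0 = 1 := zmod2_ne _ hw0
      obtain ⟨k, hk, hr⟩ := HO w.natDegree (by omega) w hw1 rfl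
      refine ⟨k + 1, ?_, ?_⟩
      · have : w.natDegree ^ 2 + 2 * w.natDegree ≤ d ^ 2 + 2 * d := by nlinarith
        nlinarith
      · rwa [Function.iterate_add_apply, Function.iterate_one, hstep]

/-- Odd polynomials of natDegree n reach constants within n² + 2n steps. -/
private lemma oddLemma : ∀ n : ℕ, ∀ f : Polynomial (ZMod 2), f.coeff 0 = 1 → f.natDegree = n →
    ∃ k, k ≤ n ^ 2 + 2 * n ∧ (polyC1^[k] f).degree ≤ 0 := by
  intro n
  induction n using Nat.strong_induction_on with
  | _ n IH =>
    intro f hf hdeg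
    rcases Nat.eq_zero_or_pos n with hn | hn
    · refine ⟨0, by omega, ?_⟩
      simp only [Function.iterate_zero, id_eq]
      calc f.degree ≤ (f.natDegree : WithBot ℕ) := degree_le_natDegree
        _ ≤ 0 := by rw [hdeg, hn]; exact le_refl _
    -- inner induction on a: f = X^a * h + 1 with h odd, a + deg h = n
    have inner : ∀ a : ℕ, 1 ≤ a → ∀ h : Polynomial (ZMod 2), h.coeff 0 = 1 →
        a + h.natDegree = n →
        ∃ k, k ≤ n ^ 2 + 2 * a ∧ (polyC1^[k] (X ^ a * h + 1)).degree ≤ 0 := by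
      intro a ha
      induction a, ha using Nat.le_induction with
      | base =>
        intro h hh hsum
        set f₁ : Polynomial (ZMod 2) := X ^ 1 * h + 1 with hf₁
        have hf₁0 : f₁.coeff 0 = 1 := by
          simp [hf₁, mul_coeff_zero, coeff_X_pow]
        have step1 : polyC1 f₁ = X * ((X + 1) * h + 1) := by
          rw [polyC1_odd _ hf₁0, hf₁]
          linear_combination two_eq_zero'
        have hmid0 : (X * ((X + 1) * h + 1)).coeff 0 = 0 := by
          simp [mul_coeff_zero]
        have step2 : polyC1 (X * ((X + 1) * h + 1)) = (X + 1) * h + 1 := by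
          rw [polyC1_even _ hmid0, divX_X_mul]
        set v : Polynomial (ZMod 2) := (X + 1) * h + 1 with hv
        have hv0 : v.coeff 0 = 0 := by
          simp [hv, mul_coeff_zero, hh]
          decide
        have hvdeg : v.natDegree ≤ n := by
          refine (natDegree_add_le _ _).trans ?_
          simp only [natDegree_one, max_eq_left (Nat.zero_le _)]
          refine (natDegree_mul_le).trans ?_
          have : (X + 1 : Polynomial (ZMod 2)).natDegree = 1 := by
            simpa using natDegree_X_add_C (1 : ZMod 2)
          omega
        obtain ⟨k, hk, hr⟩ := evenAux n (fun m hm => IH m hm) v hv0 hvdeg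
        refine ⟨k + 2, by nlinarith, ?_⟩
        rw [Function.iterate_add_apply]
        have : polyC1^[2] f₁ = v := by
          rw [Function.iterate_succ_apply', Function.iterate_one, step1, step2]
        rwa [this]
      | succ a _ IHa =>
        intro h hh hsum
        set f₁ : Polynomial (ZMod 2) := X ^ (a + 1) * h + 1 with hf₁
        have hf₁0 : f₁.coeff 0 = 1 := by
          simp [hf₁, mul_coeff_zero, coeff_X_pow]
        have step1 : polyC1 f₁ = X * (X ^ a * ((X + 1) * h) + 1) := by
          rw [polyC1_odd _ hf₁0, hf₁]
          linear_combination two_eq_zero'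
        have hmid0 : (X * (X ^ a * ((X + 1) * h) + 1)).coeff 0 = 0 := by
          simp [mul_coeff_zero]
        have step2 : polyC1 (X * (X ^ a * ((X + 1) * h) + 1)) = X ^ a * ((X + 1) * h) + 1 := by
          rw [polyC1_even _ hmid0, divX_X_mul]
        have hh' : ((X + 1) * h).coeff 0 = 1 := by
          simp [mul_coeff_zero, hh]
        have hne : (X + 1 : Polynomial (ZMod 2)) ≠ 0 := by
          intro hc
          have := natDegree_X_add_C (1 : ZMod 2)
          simp only [map_one] at this
          rw [hc] at this; simp at this
        have hhne : h ≠ 0 := fun hc => by simp [hc] at hh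
        have hsum' : a + ((X + 1) * h).natDegree = n := by
          rw [natDegree_mul hne hhne]
          have : (X + 1 : Polynomial (ZMod 2)).natDegree = 1 := by
            simpa using natDegree_X_add_C (1 : ZMod 2)
          omega
        obtain ⟨k, hk, hr⟩ := IHa ((X + 1) * h) hh' hsum'
        refine ⟨k + 2, by omega, ?_⟩
        rw [Function.iterate_add_apply]
        have : polyC1^[2] f₁ = X ^ a * ((X + 1) * h) + 1 := by
          rw [Function.iterate_succ_apply', Function.iterate_one, step1, step2]
        rwa [this]
    -- decompose f + 1 = X^a * h
    have hfne : f + 1 ≠ 0 := by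
      intro hc
      have : f = -1 := by linear_combination hc
      rw [this] at hdeg
      simp at hdeg
      omega
    set a := (f + 1).natTrailingDegree with ha
    have hdvd : X ^ a ∣ (f + 1) := by
      rw [X_pow_dvd_iff]
      exact fun d hd => coeff_eq_zero_of_lt_natTrailingDegree hd
    obtain ⟨h, hfh⟩ := hdvd
    have hh0 : h.coeff 0 ≠ 0 := by
      intro hc
      have htc : (f + 1).coeff ((f + 1).natTrailingDegree) ≠ 0 :=
        coeff_natTrailingDegree_ne_zero.mpr hfne
      apply htc
      rw [← ha, hfh]
      simpa [hc] using coeff_X_pow_mul h a 0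
    have hh1 : h.coeff 0 = 1 := zmod2_ne _ hh0
    have ha1 : 1 ≤ a := by
      rcases Nat.eq_zero_or_pos a with h0 | h0
      · exfalso
        have : (f + 1).coeff 0 = 0 := by
          simp [hf]
          decide
        rw [hfh, h0] at this
        simp at this
        exact hh0 this
      · exact h0
    have hhne : h ≠ 0 := fun hc => by simp [hc] at hh1
    have hsum : a + h.natDegree = n := by
      have h1 : (f + 1).natDegree = n := by
        have : f + 1 = f + C 1 := by simp
        rw [this, natDegree_add_C, hdeg]
      rw [hfh, natDegree_mul (pow_ne_zero a X_ne_zero) hhne, natDegree_X_pow] at h1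
      exact h1
    obtain ⟨k, hk, hr⟩ := inner a ha1 h hh1 hsum
    have hfeq : f = X ^ a * h + 1 := by linear_combination hfh - two_eq_zero'
    refine ⟨k, ?_, ?_⟩
    · have : a ≤ n := by omega
      nlinarith
    · rwa [hfeq]

/-- (Hicks–Mullen–Yucas–Zavislak, 2008) Every polynomial f ∈ 𝔽₂[x] of degree n
reaches a constant polynomial within n² + 2n iterations of C₁. -/
theorem polyC1_reaches_constant (f : Polynomial (ZMod 2)) :
    ∃ k : ℕ, k ≤ f.natDegree ^ 2 + 2 * f.natDegree ∧ (polyC1^[k] f).degree ≤ 0 := by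
  set n := f.natDegree with hn
  by_cases h0 : f.coeff 0 = 0
  · obtain ⟨k, hk, hr⟩ := evenAux n (fun m _ => oddLemma m) f h0 (le_refl _)
    exact ⟨k, by nlinarith, hr⟩
  · exact oddLemma n f (zmod2_ne _ h0) rfl
end

section
/- Let d be a positive odd integer and let C be a periodic orbit of the 3x+d map T_d on the positive integers, say of period (length) l, containing exactly k ≥ 1 odd elements. Then the smallest element m of the cycle C satisfies m · (2^(l/k) − 3) ≤ d; in particular, if 2^(l/k) > 3 then m ≤ d / (2^(l/k) − 3). -/
/-- The 3x+d map: T_d(x) = (3x+d)/2 if x is odd, x/2 if x is even. -/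
def Td (d : ℤ) (x : ℤ) : ℤ := if x % 2 = 0 then x / 2 else (3 * x + d) / 2

open scoped Classical in
/-- (Belaga, 2003) If C is a cycle of the 3x+d map on the positive integers of
length l with k ≥ 1 odd elements, then the smallest element m of C satisfies
m·(2^(l/k) − 3) ≤ d; in particular if 2^(l/k) > 3 then m ≤ d/(2^(l/k) − 3). -/
theorem belaga_perigee_bound (d : ℤ) (hd : 0 < d) (hodd : Odd d)
    (x : ℤ) (hx : 0 < x) (l k : ℕ) (hl : 0 < l)
    (hcyc : (Td d)^[l] x = x)
    (hminper : ∀ j : ℕ, 0 < j → j < l → (Td d)^[j] x ≠ x)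
    (hk : k = ((Finset.range l).filter (fun i => Odd ((Td d)^[i] x))).card)
    (hk1 : 1 ≤ k)
    (m : ℤ) (hm_mem : ∃ i < l, (Td d)^[i] x = m)
    (hm_min : ∀ i < l, m ≤ (Td d)^[i] x) :
    (m : ℝ) * ((2 : ℝ) ^ ((l : ℝ) / (k : ℝ)) - 3) ≤ (d : ℝ) ∧
    ((3 : ℝ) < (2 : ℝ) ^ ((l : ℝ) / (k : ℝ)) →
      (m : ℝ) ≤ (d : ℝ) / ((2 : ℝ) ^ ((l : ℝ) / (k : ℝ)) - 3)) := by
  obtain ⟨c, hc⟩ := hodd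
  set g : ℕ → ℤ := fun i => (Td d)^[i] x with hg
  -- positivity along the orbit
  have hpos : ∀ i : ℕ, 0 < g i := by
    intro i
    induction i with
    | zero => simpa [hg]
    | succ n ih =>
      have : g (n+1) = Td d (g n) := by
        simp only [hg, Function.iterate_succ_apply']
      rw [this]
      have h := ih
      unfold Td
      split <;> omega
  have hm_pos : 0 < m := by
    obtain ⟨i, hi, hie⟩ := hm_mem
    exact hie ▸ hpos i
  -- exact doubling relation
  have hstep2 : ∀ i : ℕ, 2 * g (i+1) = if Odd (g i) then 3 * g i + d else g i := by
    intro i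
    have hgs : g (i+1) = Td d (g i) := by
      simp only [hg, Function.iterate_succ_apply']
    rw [hgs]
    by_cases hyo : Odd (g i)
    · have h1 : g i % 2 = 1 := Int.odd_iff.mp hyo
      rw [if_pos hyo]
      unfold Td
      rw [if_neg (by omega)]
      omega
    · have h1 : g i % 2 = 0 := Int.even_iff.mp (Int.not_odd_iff_even.mp hyo)
      rw [if_neg hyo]
      unfold Td
      rw [if_pos h1]
      omega
  set P : ℤ := ∏ i ∈ Finset.range l, g i with hP
  have hPpos : 0 < P := Finset.prod_pos (fun i _ => hpos i)
  -- cyclic shift of the product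
  have hshift : ∏ i ∈ Finset.range l, g (i+1) = P := by
    have h0 : g 0 ≠ 0 := (hpos 0).ne'
    have hgl : g l = g 0 := by simp [hg, hcyc]
    have h1 : (∏ i ∈ Finset.range l, g (i+1)) * g 0 = P * g 0 := by
      rw [← Finset.prod_range_succ' g l, Finset.prod_range_succ, hgl, hP]
    exact mul_right_cancel₀ h0 h1
  set S : Finset ℕ := (Finset.range l).filter (fun i => Odd (g i)) with hS
  have hkS : k = S.card := hk
  -- the product identity
  have hmain : 2 ^ l * P =
      (∏ i ∈ S, (3 * g i + d)) * (∏ i ∈ (Finset.range l).filter (fun i => ¬ Odd (g i)), g i) := by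
    have h1 : ∏ i ∈ Finset.range l, (2 * g (i+1)) = 2 ^ l * P := by
      rw [Finset.prod_mul_distrib, Finset.prod_const, Finset.card_range, hshift]
    rw [← h1]
    rw [Finset.prod_congr rfl (fun i _ => hstep2 i)]
    exact Finset.prod_ite _ _
  -- elementwise bound on the odd part
  have hineq : (∏ i ∈ S, (3 * g i + d)) * m ^ k ≤ (∏ i ∈ S, g i) * (3 * m + d) ^ k := by
    have hmk : m ^ k = ∏ _i ∈ S, m := by rw [Finset.prod_const, hkS]
    have h3k : (3 * m + d) ^ k = ∏ _i ∈ S, (3 * m + d) := by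
      rw [Finset.prod_const, hkS]
    rw [hmk, h3k, ← Finset.prod_mul_distrib, ← Finset.prod_mul_distrib]
    apply Finset.prod_le_prod
    · intro i hi
      have := hpos i
      positivity
    · intro i hi
      have hil : i < l := Finset.mem_range.mp (Finset.mem_filter.mp hi).1
      have hmi : m ≤ g i := hm_min i hil
      have hdm : d * m ≤ d * g i := mul_le_mul_of_nonneg_left hmi hd.le
      nlinarith [hpos i]
  -- key integer inequality
  have hkey : 2 ^ l * m ^ k ≤ (3 * m + d) ^ k := by
    have hQnn : 0 ≤ ∏ i ∈ (Finset.range l).filter (fun i => ¬ Odd (g i)), g i :=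
      Finset.prod_nonneg (fun i _ => (hpos i).le)
    have hsplit : (∏ i ∈ S, g i) *
        (∏ i ∈ (Finset.range l).filter (fun i => ¬ Odd (g i)), g i) = P :=
      Finset.prod_filter_mul_prod_filter_not _ _ _
    have h2 : 2 ^ l * m ^ k * P ≤ (3 * m + d) ^ k * P := by
      calc 2 ^ l * m ^ k * P = (∏ i ∈ S, (3 * g i + d)) * m ^ k *
              (∏ i ∈ (Finset.range l).filter (fun i => ¬ Odd (g i)), g i) := by
            linear_combination (m ^ k : ℤ) * hmain
        _ ≤ (∏ i ∈ S, g i) * (3 * m + d) ^ k *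
              (∏ i ∈ (Finset.range l).filter (fun i => ¬ Odd (g i)), g i) :=
            mul_le_mul_of_nonneg_right hineq hQnn
        _ = (3 * m + d) ^ k * P := by rw [← hsplit]; ring
    exact le_of_mul_le_mul_right h2 hPpos
  -- pass to the reals
  have hkR : ((k : ℝ)) ≠ 0 := Nat.cast_ne_zero.mpr (by omega)
  set r : ℝ := (2 : ℝ) ^ ((l : ℝ) / (k : ℝ)) with hr
  have hrpos : 0 < r := Real.rpow_pos_of_pos (by norm_num) _
  have hrk : r ^ k = (2 : ℝ) ^ l := by
    rw [hr, ← Real.rpow_natCast ((2:ℝ) ^ ((l:ℝ)/(k:ℝ))) k, ← Real.rpow_mul (by norm_num),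
      div_mul_cancel₀ _ hkR, Real.rpow_natCast]
  have hcast : (2 : ℝ) ^ l * (m : ℝ) ^ k ≤ (3 * (m : ℝ) + (d : ℝ)) ^ k := by
    exact_mod_cast hkey
  have hpowle : (r * (m : ℝ)) ^ k ≤ (3 * (m : ℝ) + (d : ℝ)) ^ k := by
    rw [mul_pow, hrk]; exact hcast
  have hmR : (0 : ℝ) < (m : ℝ) := by exact_mod_cast hm_pos
  have hdR : (0 : ℝ) < (d : ℝ) := by exact_mod_cast hd
  have h3 : r * (m : ℝ) ≤ 3 * (m : ℝ) + (d : ℝ) :=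
    le_of_pow_le_pow_left₀ (by omega) (by linarith) hpowle
  have hconc : (m : ℝ) * (r - 3) ≤ (d : ℝ) := by nlinarith
  refine ⟨hconc, fun h3r => ?_⟩
  rw [le_div_iff₀ (by linarith)]
  exact hconc
end

section
/- Let d be a positive odd integer and let C be a periodic orbit of the 3x+d map T_d on the positive integers, of length l and containing exactly k ≥ 1 odd elements. Then log₂ 3 < l/k ≤ log₂(d+3); equivalently, 3^k < 2^l ≤ (d+3)^k. -/
open scoped Classical in
/-- (Belaga, 2003) If C is a cycle of the 3x+d map on the positive integers of
length l with k ≥ 1 odd elements, then log₂ 3 < l/k ≤ log₂(d+3); equivalently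
3^k < 2^l ≤ (d+3)^k. -/
theorem belaga_length_oddlength_bound (d : ℤ) (hd : 0 < d) (hodd : Odd d)
    (x : ℤ) (hx : 0 < x) (l k : ℕ) (hl : 0 < l)
    (hcyc : (Td d)^[l] x = x)
    (hminper : ∀ j : ℕ, 0 < j → j < l → (Td d)^[j] x ≠ x)
    (hk : k = ((Finset.range l).filter (fun i => Odd ((Td d)^[i] x))).card)
    (hk1 : 1 ≤ k) :
    (3 : ℤ) ^ k < 2 ^ l ∧ (2 : ℤ) ^ l ≤ (d + 3) ^ k := by
  have hd2 : d % 2 = 1 := Int.odd_iff.mp hodd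
  set f : ℕ → ℤ := fun i => (Td d)^[i] x with hf
  have hsucc : ∀ n, f (n + 1) = Td d (f n) := by
    intro n; simp [hf, Function.iterate_succ_apply']
  have hpos : ∀ i, 0 < f i := by
    intro i
    induction i with
    | zero => simpa [hf] using hx
    | succ n ih =>
      rw [hsucc]; unfold Td; split <;> omega
  have hstep : ∀ i, 2 * f (i + 1) = if Odd (f i) then 3 * f i + d else f i := by
    intro i
    rw [hsucc]; unfold Td
    rcases Int.even_or_odd (f i) with he | ho
    · have h0 : f i % 2 = 0 := Int.even_iff.mp he
      rw [if_pos h0, if_neg (by simpa [Int.not_odd_iff_even] using he)]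
      omega
    · have h1 : f i % 2 = 1 := Int.odd_iff.mp ho
      rw [if_neg (by omega), if_pos ho]
      omega
  set S := Finset.range l with hS
  set P : ℤ := ∏ i ∈ S, f i with hP
  have hPpos : 0 < P := Finset.prod_pos fun i _ => hpos i
  have hshift : ∏ i ∈ S, f (i + 1) = P := by
    have h1 := Finset.prod_range_succ' f l
    have h2 := Finset.prod_range_succ f l
    have hfl : f l = x := hcyc
    have hf0 : f 0 = x := rfl
    rw [h1, hf0] at h2
    rw [hfl] at h2
    exact mul_right_cancel₀ hx.ne' h2
  have hmain : 2 ^ l * P = ∏ i ∈ S, (if Odd (f i) then 3 * f i + d else f i) := by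
    calc 2 ^ l * P = ∏ i ∈ S, (2 * f (i + 1)) := by
          rw [Finset.prod_mul_distrib, Finset.prod_const, Finset.card_range, hshift]
      _ = _ := Finset.prod_congr rfl fun i _ => hstep i
  have hkcard : k = (S.filter (fun i => Odd (f i))).card := hk
  have hconst : ∀ (a : ℤ), ∏ i ∈ S, (if Odd (f i) then a else 1) = a ^ k := by
    intro a
    rw [Finset.prod_ite, Finset.prod_const, Finset.prod_const, one_pow, mul_one, hkcard]
  -- lower bound
  have hlow : 3 ^ k * P < 2 ^ l * P := by
    rw [hmain]
    have : (3 : ℤ) ^ k * P = ∏ i ∈ S, ((if Odd (f i) then 3 else 1) * f i) := by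
      rw [Finset.prod_mul_distrib, hconst]
    rw [this]
    obtain ⟨j, hj⟩ : ∃ j ∈ S.filter (fun i => Odd (f i)), True := by
      have : 0 < (S.filter (fun i => Odd (f i))).card := by omega
      obtain ⟨j, hj⟩ := Finset.card_pos.mp this
      exact ⟨j, hj, trivial⟩
    obtain ⟨hjS, hjodd⟩ := Finset.mem_filter.mp hj.1
    apply Finset.prod_lt_prod (f := fun i => (if Odd (f i) then 3 else 1) * f i)
    · intro i _
      have := hpos i
      split <;> nlinarith
    · intro i _
      have := hpos i
      split <;> [skip; simp] <;> nlinarith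
    · refine ⟨j, hjS, ?_⟩
      rw [if_pos hjodd, if_pos hjodd]
      nlinarith [hpos j]
  have hhigh : 2 ^ l * P ≤ (d + 3) ^ k * P := by
    rw [hmain]
    have : (d + 3) ^ k * P = ∏ i ∈ S, ((if Odd (f i) then d + 3 else 1) * f i) := by
      rw [Finset.prod_mul_distrib, hconst]
    rw [this]
    apply Finset.prod_le_prod
    · intro i _
      have := hpos i
      split <;> nlinarith
    · intro i _
      have := hpos i
      split <;> [skip; simp] <;> nlinarith
  exact ⟨lt_of_mul_lt_mul_right hlow hPpos.le, le_of_mul_le_mul_right hhigh hPpos⟩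
end

section
/- Let f be the approximate squaring map f(x) = x·⌈x⌉ on the rationals. For every rational number r > 1 whose denominator in lowest terms is 2 (i.e., r = (2m+1)/2 for some positive integer m), there exists an integer k ≥ 1 such that the iterate f^(k)(r) is an integer. -/
/-! Write r = (2m+1)/2 with m ≠ 0. Since ⌈r⌉ = m + 1, f(r) = (2m+1)(m+1)/2, which is an integer
when m is odd. When m = 2j is even, f(r) = (2m'+1)/2 again with m' = j(4j+3), and the 2-adic
valuation of m' is one less than that of m; so after v₂(m) + 1 steps an integer is reached. -/

/-- The approximate squaring map f(x) = x·⌈x⌉ on the rationals. -/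
def approxSq (x : ℚ) : ℚ := x * (⌈x⌉ : ℚ)

lemma ceil_two_mul_add_one_div_two (m : ℤ) : ⌈((2 * m + 1 : ℤ) : ℚ) / 2⌉ = m + 1 := by
  rw [Int.ceil_eq_iff]
  push_cast
  constructor <;> linarith

lemma approxSq_two_mul_add_one_div_two (m : ℤ) :
    approxSq (((2 * m + 1 : ℤ) : ℚ) / 2) = ((2 * m + 1) * (m + 1) : ℤ) / 2 := by
  rw [approxSq, ceil_two_mul_add_one_div_two]
  push_cast
  ring

lemma approxSq_half_of_odd (j : ℤ) :
    approxSq (((2 * (2 * j + 1) + 1 : ℤ) : ℚ) / 2) = ((4 * j + 3) * (j + 1) : ℤ) := by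
  rw [approxSq_two_mul_add_one_div_two]
  push_cast
  ring

lemma approxSq_half_of_even (j : ℤ) :
    approxSq (((2 * (2 * j) + 1 : ℤ) : ℚ) / 2) = ((2 * (j * (4 * j + 3)) + 1 : ℤ) : ℚ) / 2 := by
  rw [approxSq_two_mul_add_one_div_two]
  push_cast
  ring

lemma exists_iterate_approxSq_den_eq_one_of_odd (n : ℕ) {u : ℤ} (hu : Odd u) :
    ∃ k, 1 ≤ k ∧ (approxSq^[k] (((2 * (2 ^ n * u) + 1 : ℤ) : ℚ) / 2)).den = 1 := by
  induction n generalizing u with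
  | zero =>
    obtain ⟨j, rfl⟩ := hu
    refine ⟨1, le_rfl, ?_⟩
    rw [pow_zero, one_mul, Function.iterate_one, approxSq_half_of_odd, Rat.den_intCast]
  | succ n ih =>
    have hu' : Odd (u * (4 * (2 ^ n * u) + 3)) :=
      hu.mul (Even.add_odd ⟨2 * (2 ^ n * u), by ring⟩ ⟨1, by norm_num⟩)
    obtain ⟨k, hk, hden⟩ := ih hu'
    refine ⟨k + 1, by omega, ?_⟩
    rw [Function.iterate_succ_apply, pow_succ', mul_assoc, approxSq_half_of_even,
      mul_assoc (2 ^ n) u]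
    exact hden

lemma exists_iterate_approxSq_den_eq_one {m : ℤ} (hm : m ≠ 0) :
    ∃ k, 1 ≤ k ∧ (approxSq^[k] (((2 * m + 1 : ℤ) : ℚ) / 2)).den = 1 := by
  have hfin : FiniteMultiplicity 2 m := Int.finiteMultiplicity_iff.mpr ⟨by decide, hm⟩
  obtain ⟨u, hmu, hu⟩ := hfin.exists_eq_pow_mul_and_not_dvd
  rw [hmu]
  exact exists_iterate_approxSq_den_eq_one_of_odd _
    (Int.not_even_iff_odd.mp (by rwa [even_iff_two_dvd]))

/-- (Lagarias–Sloane, 2004) For every rational r > 1 with denominator 2 in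
lowest terms, some iterate of the approximate squaring map at r is an integer. -/
theorem approx_squaring_denominator_two (r : ℚ) (hr : 1 < r) (hden : r.den = 2) :
    ∃ k : ℕ, 1 ≤ k ∧ (approxSq^[k] r).den = 1 := by
  have hodd : Odd r.num := by
    have := r.reduced
    rwa [hden, Nat.coprime_two_right, Int.natAbs_odd] at this
  obtain ⟨m, hm⟩ := hodd
  have hr_eq : r = ((2 * m + 1 : ℤ) : ℚ) / 2 := by
    conv_lhs => rw [← Rat.num_div_den r, hden, hm]
    push_cast
    rfl
  have hm0 : m ≠ 0 := by
    rintro rfl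
    norm_num [hr_eq] at hr
  rw [hr_eq]
  exact exists_iterate_approxSq_den_eq_one hm0
end

section
/- For all positive integers k and m, the m-th iterate of the 3x+1 function T satisfies T^(m)(2^m·k − 1) = 3^m·k − 1. In particular, every integer of the form 2^m·k − 1 eventually iterates to 3^m·k − 1. -/
lemma aux (m : ℕ) : ∀ k : ℕ, collatzT^[m] (2 ^ m * (k : ℤ) - 1) = 3 ^ m * (k : ℤ) - 1 := by
  induction m with
  | zero => intro k; simp
  | succ n ih =>
    intro k
    rw [Function.iterate_succ_apply]
    have h1 : collatzT (2 ^ (n+1) * (k : ℤ) - 1) = 2 ^ n * ((3*k : ℕ) : ℤ) - 1 := by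
      unfold collatzT
      have : (2 ^ (n+1) * (k : ℤ) - 1) % 2 = 1 := by
        ring_nf; omega
      rw [if_neg (by omega)]
      push_cast
      ring_nf
      omega
    rw [h1, ih (3*k)]
    push_cast
    ring

/-- (Andrei–Kudlek–Niculescu, 2000) For all positive integers k and m,
T^(m)(2^m·k − 1) = 3^m·k − 1. -/
theorem iterate_two_pow_minus_one (k m : ℕ) (hk : 0 < k) (hm : 0 < m) :
    collatzT^[m] (2 ^ m * (k : ℤ) - 1) = 3 ^ m * (k : ℤ) - 1 := aux m k
end

section
/- Let x be an integer lying on a cycle of the 3x+1 function T, i.e., T^(p)(x) = x for some integer p ≥ 1. Then the sum of the even elements among T^(0)(x), T^(1)(x), …, T^(p−1)(x) equals the sum of the odd elements among them plus the number of odd elements among them: Σ_{i < p, T^(i)(x) even} T^(i)(x) = Σ_{i < p, T^(i)(x) odd} T^(i)(x) + #{i < p : T^(i)(x) odd}. -/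
lemma two_mul_collatzT_even {y : ℤ} (h : Even y) : 2 * collatzT y = y := by
  unfold collatzT
  rw [if_pos (Int.even_iff.mp h)]
  exact Int.mul_ediv_cancel' h.two_dvd

lemma two_mul_collatzT_odd {y : ℤ} (h : Odd y) : 2 * collatzT y = 3 * y + 1 := by
  unfold collatzT
  rw [if_neg (by simpa [Int.even_iff] using (Int.not_even_iff_odd.mpr h))]
  refine Int.mul_ediv_cancel' ?_
  obtain ⟨k, hk⟩ := h
  exact ⟨3 * k + 2, by ring_nf; omega⟩

open scoped Classical in
/-- (K. G. Monks, 2002) On any cycle of the 3x+1 function, the sum of the even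
elements equals the sum of the odd elements plus the number of odd elements. -/
theorem monks_cycle_even_odd_sum (x : ℤ) (p : ℕ) (hp : 1 ≤ p)
    (hcyc : collatzT^[p] x = x) :
    ∑ i ∈ (Finset.range p).filter (fun i => Even (collatzT^[i] x)), collatzT^[i] x =
      (∑ i ∈ (Finset.range p).filter (fun i => Odd (collatzT^[i] x)), collatzT^[i] x)
        + (((Finset.range p).filter (fun i => Odd (collatzT^[i] x))).card : ℤ) := by
  set f : ℕ → ℤ := fun i => collatzT^[i] x with hf
  -- shift invariance of the cycle sum
  have hshift : ∑ i ∈ Finset.range p, f (i + 1) = ∑ i ∈ Finset.range p, f i := by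
    have h1 : ∑ i ∈ Finset.range (p + 1), f i
        = (∑ i ∈ Finset.range p, f (i + 1)) + f 0 := Finset.sum_range_succ' f p
    have h2 : ∑ i ∈ Finset.range (p + 1), f i
        = (∑ i ∈ Finset.range p, f i) + f p := Finset.sum_range_succ f p
    have h3 : f p = f 0 := by simp [hf, hcyc]
    omega
  have hsucc : ∀ i, f (i + 1) = collatzT (f i) := by
    intro i; simp [hf, Function.iterate_succ_apply']
  set E := (Finset.range p).filter (fun i => Even (f i)) with hE
  set O := (Finset.range p).filter (fun i => Odd (f i)) with hO
  have hsplit : ∀ g : ℕ → ℤ, ∑ i ∈ Finset.range p, g i = ∑ i ∈ E, g i + ∑ i ∈ O, g i := by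
    intro g
    rw [hE, hO]
    rw [← Finset.sum_filter_add_sum_filter_not (Finset.range p) (fun i => Even (f i)) g]
    congr 1
    apply Finset.sum_congr
    · ext i; simp [Int.not_even_iff_odd]
    · intros; rfl
  -- multiply the shifted sum by 2
  have key : 2 * ∑ i ∈ Finset.range p, f (i + 1)
      = ∑ i ∈ E, f i + (∑ i ∈ O, (3 * f i + 1)) := by
    rw [Finset.mul_sum]
    have : ∀ i, 2 * f (i + 1) = (fun i => 2 * collatzT (f i)) i := by
      intro i; rw [hsucc]
    rw [Finset.sum_congr rfl (fun i _ => this i)]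
    rw [hsplit (fun i => 2 * collatzT (f i))]
    congr 1
    · exact Finset.sum_congr rfl fun i hi => two_mul_collatzT_even (by
        simp [hE] at hi; exact hi.2)
    · exact Finset.sum_congr rfl fun i hi => two_mul_collatzT_odd (by
        simp [hO] at hi; exact hi.2)
  have hOsum : ∑ i ∈ O, (3 * f i + 1) = 3 * ∑ i ∈ O, f i + O.card := by
    rw [Finset.sum_add_distrib, ← Finset.mul_sum]
    simp
  have htotal : ∑ i ∈ Finset.range p, f i = ∑ i ∈ E, f i + ∑ i ∈ O, f i := hsplit f
  rw [hshift, htotal, hOsum] at key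
  linarith
end

section
/- For a positive integer n, define σ_n on the set {1, 2, …, n} by σ_n(x) = x/2 if x is even and σ_n(x) = (2n+1−x)/2 if x is odd; this map is a permutation of {1, …, n}. Call n a Queneau number if σ_n is a cyclic permutation (a single n-cycle). Then n is a Queneau number if and only if p = 2n+1 is prime and either (i) p ≡ 3 or 5 (mod 8) and 2 is a primitive root modulo p, i.e., the multiplicative order of 2 modulo p equals 2n, or (ii) p ≡ 7 (mod 8) and the multiplicative order of 2 modulo p equals n. -/
/-- The spiral permutation σ_n on {1, …, n}: σ_n(x) = x/2 if x is even, and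
σ_n(x) = (2n+1−x)/2 if x is odd. -/
def quenine (n : ℕ) (x : ℕ) : ℕ := if x % 2 = 0 then x / 2 else (2 * n + 1 - x) / 2

private lemma quenine_spec {n x : ℕ} (hn : 0 < n) (hx : x ∈ Finset.Icc 1 n) :
    quenine n x ∈ Finset.Icc 1 n ∧
      (2 * quenine n x = x ∨ (2 * quenine n x = 2 * n + 1 - x ∧ x % 2 = 1)) := by
  simp only [Finset.mem_Icc] at *
  rw [quenine]
  split_ifs with h <;> omega

private lemma quenine_cast {n x : ℕ} (hn : 0 < n) (hx : x ∈ Finset.Icc 1 n) :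
    (2 : ZMod (2*n+1)) * (quenine n x : ZMod (2*n+1)) = (x : ZMod (2*n+1)) ∨
    (2 : ZMod (2*n+1)) * (quenine n x : ZMod (2*n+1)) = -(x : ZMod (2*n+1)) := by
  rcases (quenine_spec hn hx).2 with h | ⟨h, -⟩
  · left
    have := congrArg (fun m : ℕ => (m : ZMod (2*n+1))) h
    push_cast at this; exact this
  · right
    have hx' : x ≤ 2*n+1 := by simp only [Finset.mem_Icc] at hx; omega
    have h2 : ((2*n+1 - x : ℕ) : ZMod (2*n+1)) = -(x : ZMod (2*n+1)) := by
      rw [Nat.cast_sub hx', ZMod.natCast_self, zero_sub]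
    have h3 : (2 : ZMod (2*n+1)) * (quenine n x : ZMod (2*n+1))
        = ((2 * quenine n x : ℕ) : ZMod (2*n+1)) := by push_cast; ring
    rw [h3, h, h2]

private lemma cast_eq_pm {n x y : ℕ} (hn : 0 < n) (hx : x ∈ Finset.Icc 1 n)
    (hy : y ∈ Finset.Icc 1 n)
    (h : (x : ZMod (2*n+1)) = (y : ZMod (2*n+1)) ∨ (x : ZMod (2*n+1)) = -(y : ZMod (2*n+1))) :
    x = y := by
  simp only [Finset.mem_Icc] at hx hy
  rcases h with h | h
  · have h2 : x % (2*n+1) = y % (2*n+1) := (ZMod.natCast_eq_natCast_iff x y (2*n+1)).1 h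
    have hx2 : x % (2*n+1) = x := Nat.mod_eq_of_lt (by omega)
    have hy2 : y % (2*n+1) = y := Nat.mod_eq_of_lt (by omega)
    rw [hx2, hy2] at h2
    exact h2
  · exfalso
    have h2 : ((x + y : ℕ) : ZMod (2*n+1)) = 0 := by push_cast; rw [h]; ring
    rw [ZMod.natCast_eq_zero_iff] at h2
    have := Nat.le_of_dvd (by omega) h2
    omega



private lemma quenine_iter {n x : ℕ} (hn : 0 < n) (hx : x ∈ Finset.Icc 1 n) (k : ℕ) :
    (quenine n)^[k] x ∈ Finset.Icc 1 n ∧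
      ((2 : ZMod (2*n+1))^k * ((quenine n)^[k] x : ZMod (2*n+1)) = (x : ZMod (2*n+1)) ∨
       (2 : ZMod (2*n+1))^k * ((quenine n)^[k] x : ZMod (2*n+1)) = -(x : ZMod (2*n+1))) := by
  induction k with
  | zero => exact ⟨hx, Or.inl (by simp)⟩
  | succ k ih =>
    obtain ⟨hmem, hval⟩ := ih
    rw [Function.iterate_succ_apply']
    refine ⟨(quenine_spec hn hmem).1, ?_⟩
    have key : ∀ z : ZMod (2*n+1), (2 : ZMod (2*n+1))^(k+1) * z = 2^k * (2 * z) :=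
      fun z => by ring
    rcases quenine_cast hn hmem with h | h <;> rcases hval with h2 | h2
    · left; rw [key, h]; exact h2
    · right; rw [key, h]; exact h2
    · right; rw [key, h, mul_neg, h2]
    · left; rw [key, h, mul_neg, h2, neg_neg]

private lemma prime_of_queneau {n : ℕ} (hn : 0 < n)
    (h : ∃ x ∈ Finset.Icc 1 n, ∀ y ∈ Finset.Icc 1 n, ∃ k : ℕ, (quenine n)^[k] x = y) :
    Nat.Prime (2*n+1) := by
  by_contra hp
  obtain ⟨x, hx, hcov⟩ := h
  set q := Nat.minFac (2*n+1) with hq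
  have hqprime : q.Prime := Nat.minFac_prime (by omega)
  have hqdvd : q ∣ 2*n+1 := Nat.minFac_dvd _
  have hqodd : q % 2 = 1 := by
    rcases hqprime.eq_two_or_odd with h2 | ho
    · exfalso
      rw [h2] at hqdvd
      omega
    · exact ho
  have hcop : Nat.Coprime q 2 := by
    have h1 := Nat.gcd_dvd_right q 2
    have h2 := Nat.gcd_dvd_left q 2
    rcases (Nat.dvd_prime Nat.prime_two).1 h1 with hg | hg
    . exact hg
    . exfalso; rw [hg] at h2; omega
  have hsq : q^2 ≤ 2*n+1 := Nat.minFac_sq_le_self (by omega) hp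
  have hq3 : 3 ≤ q := by have := hqprime.two_le; omega
  have hqn : q ≤ n := by nlinarith [hsq, hq3]
  have hstep : ∀ z, z ∈ Finset.Icc 1 n → (q ∣ quenine n z ↔ q ∣ z) := by
    intro z hz
    rcases (quenine_spec hn hz).2 with h | ⟨h, -⟩
    · constructor
      · intro hd
        rw [← h]
        exact hd.mul_left 2
      · intro hd
        rw [← h] at hd
        exact hcop.dvd_of_dvd_mul_left hd
    · have hzle : z ≤ 2*n+1 := by
        simp only [Finset.mem_Icc] at hz; omega
      constructor
      · intro hd
        have h1 : q ∣ 2*n+1 - z := by rw [← h]; exact hd.mul_left 2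
        have h2 : z = (2*n+1) - (2*n+1 - z) := by omega
        rw [h2]
        exact Nat.dvd_sub hqdvd h1
      · intro hd
        have h1 : q ∣ 2*n+1 - z := Nat.dvd_sub hqdvd hd
        rw [← h] at h1
        exact hcop.dvd_of_dvd_mul_left h1
  have hiter : ∀ k, q ∣ (quenine n)^[k] x ↔ q ∣ x := by
    intro k
    induction k with
    | zero => simp
    | succ k ih =>
      rw [Function.iterate_succ_apply', hstep _ ((quenine_iter hn hx k).1), ih]
  obtain ⟨k1, hk1⟩ := hcov q (Finset.mem_Icc.2 ⟨by omega, hqn⟩)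
  obtain ⟨k2, hk2⟩ := hcov 1 (Finset.mem_Icc.2 ⟨le_rfl, hn⟩)
  have hd1 : q ∣ x := (hiter k1).1 (by rw [hk1])
  have hd2 : q ∣ 1 := by
    have := (hiter k2).2 hd1
    rwa [hk2] at this
  have := Nat.le_of_dvd one_pos hd2
  omega

private lemma ptwo_ne_zero {n : ℕ} (hn : 0 < n) (hp : Nat.Prime (2*n+1)) :
    (2 : ZMod (2*n+1)) ≠ 0 := by
  have : ((2:ℕ) : ZMod (2*n+1)) ≠ 0 := by
    rw [Ne, ZMod.natCast_eq_zero_iff]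
    intro hdvd
    have := Nat.le_of_dvd (by norm_num) hdvd
    omega
  simpa using this

private lemma orderOf_four_iff {n : ℕ} (hn : 0 < n) (hp : Nat.Prime (2*n+1)) :
    orderOf (4 : ZMod (2*n+1)) = n ↔
      ((((2*n+1) % 8 = 3 ∨ (2*n+1) % 8 = 5) ∧ orderOf (2 : ZMod (2*n+1)) = 2*n) ∨
       ((2*n+1) % 8 = 7 ∧ orderOf (2 : ZMod (2*n+1)) = n)) := by
  haveI : Fact (Nat.Prime (2*n+1)) := ⟨hp⟩
  have h2ne : (2 : ZMod (2*n+1)) ≠ 0 := ptwo_ne_zero hn hp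
  have h4eq : (4 : ZMod (2*n+1)) = 2^2 := by norm_num
  have hords : orderOf (4 : ZMod (2*n+1))
      = orderOf (2 : ZMod (2*n+1)) / Nat.gcd (orderOf (2 : ZMod (2*n+1))) 2 := by
    rw [h4eq]
    exact orderOf_pow' _ (by norm_num)
  have hsq : IsSquare (2 : ZMod (2*n+1)) ↔ (2 : ZMod (2*n+1))^n = 1 := by
    have := ZMod.euler_criterion (p := 2*n+1) h2ne
    rwa [show (2*n+1)/2 = n by omega] at this
  have hsq8 : IsSquare (2 : ZMod (2*n+1)) ↔ (2*n+1) % 8 = 1 ∨ (2*n+1) % 8 = 7 :=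
    ZMod.exists_sq_eq_two_iff (by omega)
  set e := orderOf (2 : ZMod (2*n+1)) with he
  have hgd : Nat.gcd e 2 = 1 ∨ Nat.gcd e 2 = 2 :=
    (Nat.dvd_prime Nat.prime_two).1 (Nat.gcd_dvd_right e 2)
  constructor
  · intro h
    rw [hords] at h
    rcases hgd with hg | hg
    · rw [hg, Nat.div_one] at h
      have hn2 : (2 : ZMod (2*n+1))^n = 1 := by
        have hpow := pow_orderOf_eq_one (2 : ZMod (2*n+1))
        rw [← he, h] at hpow
        exact hpow
      have h17 := hsq8.1 (hsq.2 hn2)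
      have hodd : n % 2 = 1 := by
        by_contra hc
        have h2n : 2 ∣ n := by omega
        rw [h] at hg
        have := Nat.dvd_gcd h2n (dvd_refl 2)
        omega
      right
      exact ⟨by omega, h⟩
    · have h2e : 2 ∣ e := by
        have := Nat.gcd_dvd_left e 2
        rwa [hg] at this
      rw [hg] at h
      have he2n : e = 2*n := by omega
      have hne : (2 : ZMod (2*n+1))^n ≠ 1 := by
        intro hc
        have hd := orderOf_dvd_of_pow_eq_one hc
        rw [← he, he2n] at hd
        have := Nat.le_of_dvd hn hd
        omega
      have h8 : ¬((2*n+1) % 8 = 1 ∨ (2*n+1) % 8 = 7) := fun hc => hne (hsq.1 (hsq8.2 hc))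
      push_neg at h8
      left
      exact ⟨by omega, he2n⟩
  · rintro (⟨h8, he2n⟩ | ⟨h8, hen⟩)
    · rw [hords, he2n]
      have hg2 : Nat.gcd (2*n) 2 = 2 := by
        have h1 : Nat.gcd (2*n) 2 ≤ 2 := Nat.le_of_dvd (by norm_num) (Nat.gcd_dvd_right _ _)
        have h2 : (2:ℕ) ∣ Nat.gcd (2*n) 2 := Nat.dvd_gcd ⟨n, rfl⟩ dvd_rfl
        have h0 : 0 < Nat.gcd (2*n) 2 := Nat.gcd_pos_of_pos_right _ (by norm_num)
        omega
      rw [hg2]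
      omega
    · have hodd : n % 2 = 1 := by omega
      rw [hords, hen]
      have hg1 : Nat.gcd n 2 = 1 := by
        rcases (Nat.dvd_prime Nat.prime_two).1 (Nat.gcd_dvd_right n 2) with hg | hg
        · exact hg
        · exfalso
          have := Nat.gcd_dvd_left n 2
          rw [hg] at this
          omega
      rw [hg1, Nat.div_one]


private lemma queneau_iff_orderOf_four {n : ℕ} (hn : 0 < n) (hp : Nat.Prime (2*n+1)) :
    (∃ x ∈ Finset.Icc 1 n, ∀ y ∈ Finset.Icc 1 n, ∃ k : ℕ, (quenine n)^[k] x = y) ↔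
    orderOf (4 : ZMod (2*n+1)) = n := by
  haveI : Fact (Nat.Prime (2*n+1)) := ⟨hp⟩
  have h2ne : (2 : ZMod (2*n+1)) ≠ 0 := ptwo_ne_zero hn hp
  have hpow : (2 : ZMod (2*n+1)) ^ (2*n) = 1 := by
    have := ZMod.pow_card_sub_one_eq_one h2ne
    rwa [show 2*n+1-1 = 2*n from rfl] at this
  have h4eq : (4 : ZMod (2*n+1)) = 2^2 := by norm_num
  have h4pow : (4 : ZMod (2*n+1))^n = 1 := by
    rw [h4eq, ← pow_mul]
    exact hpow
  have hdvd : orderOf (4 : ZMod (2*n+1)) ∣ n := orderOf_dvd_of_pow_eq_one h4pow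
  constructor
  · rintro ⟨x, hx, hcov⟩
    set m := orderOf (4 : ZMod (2*n+1)) with hm
    have hm0 : 0 < m := Nat.pos_of_dvd_of_pos hdvd hn
    have h2m : (2 : ZMod (2*n+1))^m = 1 ∨ (2 : ZMod (2*n+1))^m = -1 := by
      apply mul_self_eq_one_iff.1
      have h2m' : (2 : ZMod (2*n+1))^m * 2^m = 4^m := by
        rw [← pow_add, h4eq, ← pow_mul, two_mul m]
      rw [h2m']
      exact pow_orderOf_eq_one _
    have hfix : ∀ z ∈ Finset.Icc 1 n, (quenine n)^[m] z = z := by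
      intro z hz
      obtain ⟨hmem, hval⟩ := quenine_iter hn hz m
      apply cast_eq_pm hn hmem hz
      rcases h2m with h | h <;> rcases hval with h2 | h2
      · left; rwa [h, one_mul] at h2
      · right; rwa [h, one_mul] at h2
      · right; rw [h] at h2; linear_combination -h2
      · left; rw [h] at h2; linear_combination -h2
    have hper : ∀ q, (quenine n)^[m*q] x = x := by
      intro q
      induction q with
      | zero => simp
      | succ q ih =>
        rw [Nat.mul_succ, Function.iterate_add_apply, hfix x hx, ih]
    have hsub : Finset.Icc 1 n ⊆ (Finset.range m).image (fun k => (quenine n)^[k] x) := by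
      intro y hy
      obtain ⟨k, hk⟩ := hcov y hy
      rw [Finset.mem_image]
      refine ⟨k % m, Finset.mem_range.2 (Nat.mod_lt _ hm0), ?_⟩
      have hsplit : (quenine n)^[k % m] x = (quenine n)^[k] x := by
        conv_rhs => rw [← Nat.mod_add_div k m]
        rw [Function.iterate_add_apply, hper]
      rw [hsplit, hk]
    have hcard : n ≤ m := by
      have h1 := Finset.card_le_card hsub
      have h2 := Finset.card_image_le
        (s := Finset.range m) (f := fun k => (quenine n)^[k] x)
      simp only [Nat.card_Icc, Finset.card_range] at h1 h2
      omega
    exact Nat.le_antisymm (Nat.le_of_dvd hn hdvd) hcard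
  · intro hord
    refine ⟨1, Finset.mem_Icc.2 ⟨le_rfl, hn⟩, fun y hy => ?_⟩
    have hy' := Finset.mem_Icc.1 hy
    have hyne : (y : ZMod (2*n+1)) ≠ 0 := by
      rw [Ne, ZMod.natCast_eq_zero_iff]
      intro hd
      have := Nat.le_of_dvd (by omega) hd
      omega
    have h4ne : (4 : ZMod (2*n+1)) ≠ 0 := by
      rw [h4eq]; exact pow_ne_zero _ h2ne
    -- work in the unit group
    obtain ⟨u, hu⟩ := hyne.isUnit
    obtain ⟨v, hv⟩ := h4ne.isUnit
    have hvord : orderOf v = n := by rw [← orderOf_units, hv, hord]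
    have hvn : v ^ n = 1 := by
      have := pow_orderOf_eq_one v
      rwa [hvord] at this
    classical
    have hcardle := IsCyclic.card_pow_eq_one_le (α := (ZMod (2*n+1))ˣ) hn
    set S : Finset (ZMod (2*n+1))ˣ := Finset.univ.filter (fun b => b ^ n = 1) with hS
    set T : Finset (ZMod (2*n+1))ˣ := (Finset.range n).image (fun k => v ^ k) with hT
    have hTS : T ⊆ S := by
      intro b hb
      rw [hT, Finset.mem_image] at hb
      obtain ⟨k, -, rfl⟩ := hb
      rw [hS, Finset.mem_filter]
      exact ⟨Finset.mem_univ _, by rw [← pow_mul, mul_comm k n, pow_mul, hvn, one_pow]⟩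
    have hTcard : T.card = n := by
      rw [hT, Finset.card_image_of_injOn, Finset.card_range]
      rw [Finset.coe_range]
      have h := pow_injOn_Iio_orderOf (x := v)
      rwa [hvord] at h
    have hST : S = T := (Finset.eq_of_subset_of_card_le hTS (by
      rw [hTcard]
      exact hcardle)).symm
    have huS : u ^ 2 ∈ S := by
      rw [hS, Finset.mem_filter]
      refine ⟨Finset.mem_univ _, ?_⟩
      rw [← pow_mul]
      have := ZMod.units_pow_card_sub_one_eq_one (2*n+1) u
      rwa [show 2*n+1-1 = 2*n from rfl] at this
    rw [hST, hT, Finset.mem_image] at huS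
    obtain ⟨j, -, hj⟩ := huS
    -- choose k with j + k ≡ 0 mod n
    refine ⟨n * (j+1) - j, ?_⟩
    set k := n * (j+1) - j with hk
    have hjle : j ≤ n * (j+1) := by
      calc j ≤ j + 1 := Nat.le_succ j
        _ = 1 * (j+1) := (one_mul _).symm
        _ ≤ n * (j+1) := Nat.mul_le_mul_right _ hn
    have hjk : j + k = n * (j+1) := by rw [hk]; omega
    have hkey : (y : ZMod (2*n+1))^2 * (4 : ZMod (2*n+1))^k = 1 := by
      have : u ^ 2 * v ^ k = 1 := by
        rw [← hj, ← pow_add, hjk, pow_mul, hvn, one_pow]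
      have hcast := congrArg (Units.val) this
      push_cast at hcast
      rwa [hu, hv] at hcast
    have hy2k : (y : ZMod (2*n+1)) * (2:ZMod (2*n+1))^k = 1 ∨
        (y : ZMod (2*n+1)) * (2:ZMod (2*n+1))^k = -1 := by
      apply mul_self_eq_one_iff.1
      have h42 : (4 : ZMod (2*n+1))^k = ((2:ZMod (2*n+1))^k)^2 := by
        rw [h4eq, ← pow_mul, ← pow_mul, mul_comm 2 k]
      rw [← hkey, h42]
      ring
    obtain ⟨hmem, hval⟩ := quenine_iter hn (Finset.mem_Icc.2 ⟨le_rfl, hn⟩ :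
      (1:ℕ) ∈ Finset.Icc 1 n) k
    have h1cast : ((1:ℕ) : ZMod (2*n+1)) = 1 := Nat.cast_one
    rw [h1cast] at hval
    have hkne : (2 : ZMod (2*n+1))^k ≠ 0 := pow_ne_zero _ h2ne
    have hfin : ((quenine n)^[k] 1 : ZMod (2*n+1)) = (y : ZMod (2*n+1)) ∨
        ((quenine n)^[k] 1 : ZMod (2*n+1)) = -(y : ZMod (2*n+1)) := by
      rcases hval with h1 | h1 <;> rcases hy2k with h2 | h2
      · left; apply mul_left_cancel₀ hkne; linear_combination h1 - h2
      · right; apply mul_left_cancel₀ hkne; linear_combination h1 + h2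
      · right; apply mul_left_cancel₀ hkne; linear_combination h1 + h2
      · left; apply mul_left_cancel₀ hkne; linear_combination h1 - h2
    exact cast_eq_pm hn hmem hy hfin


/-- (Dumas, 2008) n is a Queneau number (σ_n is a cyclic permutation of
{1, …, n}) if and only if p = 2n+1 is prime and either p ≡ 3, 5 (mod 8) and the
multiplicative order of 2 mod p is 2n, or p ≡ 7 (mod 8) and the multiplicative
order of 2 mod p is n. -/
theorem dumas_queneau_characterization (n : ℕ) (hn : 0 < n) :
    (∃ x ∈ Finset.Icc 1 n, ∀ y ∈ Finset.Icc 1 n, ∃ k : ℕ, (quenine n)^[k] x = y) ↔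
    (Nat.Prime (2 * n + 1) ∧
      (((((2 * n + 1) % 8 = 3) ∨ ((2 * n + 1) % 8 = 5)) ∧
          orderOf (2 : ZMod (2 * n + 1)) = 2 * n) ∨
       (((2 * n + 1) % 8 = 7) ∧ orderOf (2 : ZMod (2 * n + 1)) = n))) := by
  constructor
  · intro h
    have hp := prime_of_queneau hn h
    exact ⟨hp, (orderOf_four_iff hn hp).1 ((queneau_iff_orderOf_four hn hp).1 h)⟩
  · rintro ⟨hp, hrhs⟩
    exact (queneau_iff_orderOf_four hn hp).2 ((orderOf_four_iff hn hp).2 hrhs)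
end
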